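/- arXiv:1310.8089 — 9 statements merged into one kernel-verified Lean document; each statement's English description precedes it below -/
import Mathlib

section
/- Let (S, κ) be an S-complex over a PID R, and let (A, B, C, m) be an acyclic partial matching on it. Fix σ ∈ A and let κ̄ be the reduced coincidence index on S̄ = S \ {m(σ), σ} defined by κ̄(η, ξ) = κ(η, ξ) − κ(η, σ)·κ(m(σ), ξ)/κ(m(σ), σ). Then for every τ ∈ A \ {σ}, κ̄(m(τ), τ) = κ(m(τ), τ); in particular κ̄(m(τ), τ) is invertible in R. -/
/-- An `S`-complex over a ring `R`: a finite graded set with a coincidence index `κ`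
raising dimension by one and whose induced boundary squares to zero. -/
structure SComplex (R S : Type*) [CommRing R] [Fintype S] [DecidableEq S] where
  dim : S → ℕ
  κ : S → S → R
  dim_rule : ∀ σ τ, κ σ τ ≠ 0 → dim σ = dim τ + 1
  dsq : ∀ σ ξ, ∑ τ, κ σ τ * κ τ ξ = 0

/-- A partial matching `(A, B, C, m)` on an `S`-complex: a partition of `S` together
with a bijection `m : A → B` such that `κ(m τ, τ)` is invertible for `τ ∈ A`. -/
structure PartialMatching {R S : Type*} [CommRing R] [Fintype S] [DecidableEq S]
    (X : SComplex R S) where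
  A : Set S
  B : Set S
  C : Set S
  m : S → S
  cover : A ∪ B ∪ C = Set.univ
  disjAB : Disjoint A B
  disjAC : Disjoint A C
  disjBC : Disjoint B C
  bij : Set.BijOn m A B
  unit : ∀ τ ∈ A, IsUnit (X.κ (m τ) τ)

/-- Acyclicity of a partial matching: there is no nontrivial sequence
`σ₀, m σ₀, σ₁, m σ₁, …, σ_p, m σ_p, σ_{p+1} = σ₀` with `σ_{i+1} ≠ σ_i` and `σ_{i+1}`
a primary face of `m σ_i`. -/
def PartialMatching.Acyclic {R S : Type*} [CommRing R] [Fintype S] [DecidableEq S]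
    {X : SComplex R S} (M : PartialMatching X) : Prop :=
  ¬ ∃ (p : ℕ) (σ : ℕ → S), (∀ i ≤ p, σ i ∈ M.A) ∧ σ (p + 1) = σ 0 ∧
      ∀ i ≤ p, σ (i + 1) ≠ σ i ∧ X.κ (M.m (σ i)) (σ (i + 1)) ≠ 0

/-- The reduced coincidence index obtained by reduction of the pair `(m σ₀, σ₀)`:
`κ̄(η, ξ) = κ(η, ξ) − κ(η, σ₀)·κ(m σ₀, ξ)/κ(m σ₀, σ₀)`. -/
noncomputable def reducedKappa {R S : Type*} [CommRing R] [Fintype S] [DecidableEq S]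
    (X : SComplex R S) (M : PartialMatching X) (σ₀ : S) : S → S → R :=
  fun η ξ => X.κ η ξ - X.κ η σ₀ * Ring.inverse (X.κ (M.m σ₀) σ₀) * X.κ (M.m σ₀) ξ

/-- for an acyclic partial matching on an `S`-complex over a PID and a
reduction at `(m σ₀, σ₀)`, for every `τ ∈ A \ {σ₀}` one has
`κ̄(m τ, τ) = κ(m τ, τ)`, which is in particular invertible. -/
theorem stmt4 {R S : Type*} [CommRing R] [IsDomain R] [IsPrincipalIdealRing R]
    [Fintype S] [DecidableEq S] (X : SComplex R S) (M : PartialMatching X)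
    (hac : M.Acyclic) {σ₀ : S} (hσ₀ : σ₀ ∈ M.A) {τ : S} (hτ : τ ∈ M.A) (hne : τ ≠ σ₀) :
    reducedKappa X M σ₀ (M.m τ) τ = X.κ (M.m τ) τ ∧
      IsUnit (reducedKappa X M σ₀ (M.m τ) τ) := by
  have hzero : X.κ (M.m τ) σ₀ * X.κ (M.m σ₀) τ = 0 := by
    by_contra h
    have h1 : X.κ (M.m τ) σ₀ ≠ 0 := fun h' => h (by rw [h', zero_mul])
    have h2 : X.κ (M.m σ₀) τ ≠ 0 := fun h' => h (by rw [h', mul_zero])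
    apply hac
    refine ⟨1, fun i => if i = 1 then σ₀ else τ, ?_, by norm_num, ?_⟩
    · intro i hi
      interval_cases i <;> simp [hτ, hσ₀]
    · intro i hi
      interval_cases i <;> simp [hne, Ne.symm hne, h1, h2]
  have key : reducedKappa X M σ₀ (M.m τ) τ = X.κ (M.m τ) τ := by
    unfold reducedKappa
    have : X.κ (M.m τ) σ₀ * Ring.inverse (X.κ (M.m σ₀) σ₀) * X.κ (M.m σ₀) τ = 0 := by
      rw [mul_right_comm, mul_assoc, ← mul_assoc (X.κ (M.m τ) σ₀), hzero, zero_mul]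
    rw [this, sub_zero]
  exact ⟨key, key ▸ M.unit τ hτ⟩
end

section
/- Let (A, B, C, m) be an acyclic partial matching on an S-complex (S, κ) and fix σ ∈ A. Define Ā = A \ {σ}, B̄ = B \ {m(σ)}, C̄ = C, and m̄ the restriction of m to Ā. Then (Ā, B̄, C̄, m̄) is an acyclic partial matching on the reduced S-complex (S̄, κ̄) obtained by reduction of the pair (m(σ), σ). -/
/-!
Acyclicity of a matching is irreflexivity of the transitive closure of the edge relation
`a → m a → b` (with `κ(m a, b) ≠ 0`) of its modified Hasse diagram. If `κ̄(m a, b) ≠ 0` but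
`κ(m a, b) = 0`, the correction term is nonzero, so `κ(m a, σ₀) ≠ 0 ≠ κ(m σ₀, b)` and the
reduced edge lifts to the path `a → σ₀ → b`; hence a reduced cycle lifts to an original one.
The same argument applied to the 2-cycle `τ → σ₀ → τ` shows `κ̄(m τ, τ) = κ(m τ, τ)`.
-/

namespace Relation

variable {α : Type*} {r : α → α → Prop}

theorem TransGen.exists_seq {a b : α} (h : TransGen r a b) :
    ∃ (p : ℕ) (f : ℕ → α), f 0 = a ∧ f (p + 1) = b ∧ ∀ i ≤ p, r (f i) (f (i + 1)) := by
  induction h with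
  | @single b hab => exact ⟨0, fun i => if i = 0 then a else b, rfl, rfl, by simpa⟩
  | @tail b c _ hbc ih =>
    obtain ⟨p, f, hf0, hfp, hf⟩ := ih
    refine ⟨p + 1, fun i => if i ≤ p + 1 then f i else c, by simpa, by simp, fun i hi => ?_⟩
    rcases hi.lt_or_eq with hi | rfl
    · simpa [show i ≤ p + 1 by omega, show i + 1 ≤ p + 1 by omega] using hf i (by omega)
    · simpa [hfp] using hbc

theorem transGen_of_forall_le {p : ℕ} {f : ℕ → α} (hf : ∀ i ≤ p, r (f i) (f (i + 1))) :
    TransGen r (f 0) (f (p + 1)) := by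
  induction p with
  | zero => exact .single (hf 0 le_rfl)
  | succ p ih => exact (ih fun i hi => hf i (by omega)).tail (hf _ le_rfl)

end Relation

open Relation

/-- An edge `a → m a → b` of the modified Hasse diagram of a matching `m` on `A`. -/
def matchingStep {S β : Type*} [Zero β] (A : Set S) (m : S → S) (κ : S → S → β) (a b : S) :
    Prop :=
  a ∈ A ∧ b ∈ A ∧ b ≠ a ∧ κ (m a) b ≠ 0

theorem not_exists_cycle_iff {S β : Type*} [Zero β] (A : Set S) (m : S → S) (κ : S → S → β) :
    (¬ ∃ (p : ℕ) (σ : ℕ → S), (∀ i ≤ p, σ i ∈ A) ∧ σ (p + 1) = σ 0 ∧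
        ∀ i ≤ p, σ (i + 1) ≠ σ i ∧ κ (m (σ i)) (σ (i + 1)) ≠ 0) ↔
      ∀ a, ¬ TransGen (matchingStep A m κ) a a := by
  rw [← not_exists, not_iff_not]
  constructor
  · rintro ⟨p, σ, hA, hcyc, hstep⟩
    have hA' : ∀ i ≤ p + 1, σ i ∈ A := fun i hi => by
      rcases hi.lt_or_eq with hi | rfl
      · exact hA i (by omega)
      · exact hcyc ▸ hA 0 p.zero_le
    have h : TransGen (matchingStep A m κ) (σ 0) (σ (p + 1)) :=
      transGen_of_forall_le fun i hi => ⟨hA i hi, hA' (i + 1) (by omega), hstep i hi⟩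
    exact ⟨σ 0, hcyc ▸ h⟩
  · rintro ⟨a, h⟩
    obtain ⟨p, σ, hσ0, hσp, hstep⟩ := h.exists_seq
    exact ⟨p, σ, fun i hi => (hstep i hi).1, hσp.trans hσ0.symm,
      fun i hi => (hstep i hi).2.2⟩

namespace PartialMatching

variable {R S : Type*} [CommRing R] [Fintype S] [DecidableEq S] {X : SComplex R S}
  {M : PartialMatching X} {σ₀ : S}

theorem acyclic_iff : M.Acyclic ↔ ∀ a, ¬ TransGen (matchingStep M.A M.m X.κ) a a :=
  not_exists_cycle_iff M.A M.m X.κ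

theorem kappa_eq_zero_or_of_acyclic (hac : M.Acyclic) (hσ₀ : σ₀ ∈ M.A) {τ : S}
    (hτ : τ ∈ M.A \ {σ₀}) : X.κ (M.m τ) σ₀ = 0 ∨ X.κ (M.m σ₀) τ = 0 := by
  by_contra! h
  have hne : τ ≠ σ₀ := hτ.2
  exact acyclic_iff.1 hac τ <|
    .tail (.single ⟨hτ.1, hσ₀, hne.symm, h.1⟩) ⟨hσ₀, hτ.1, hne, h.2⟩

theorem reducedKappa_m_self (hac : M.Acyclic) (hσ₀ : σ₀ ∈ M.A) {τ : S}
    (hτ : τ ∈ M.A \ {σ₀}) : reducedKappa X M σ₀ (M.m τ) τ = X.κ (M.m τ) τ := by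
  rcases kappa_eq_zero_or_of_acyclic hac hσ₀ hτ with h | h <;> simp [reducedKappa, h]

theorem transGen_of_reduced_matchingStep (hσ₀ : σ₀ ∈ M.A) {a b : S}
    (h : matchingStep (M.A \ {σ₀}) M.m (reducedKappa X M σ₀) a b) :
    TransGen (matchingStep M.A M.m X.κ) a b := by
  obtain ⟨ha, hb, hba, hκ⟩ := h
  by_cases hab : X.κ (M.m a) b = 0
  · have hprod : X.κ (M.m a) σ₀ * Ring.inverse (X.κ (M.m σ₀) σ₀) * X.κ (M.m σ₀) b ≠ 0 := by
      simpa [reducedKappa, hab] using hκ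
    have haσ₀ : X.κ (M.m a) σ₀ ≠ 0 := fun h => hprod (by simp [h])
    have hσ₀b : X.κ (M.m σ₀) b ≠ 0 := fun h => hprod (by simp [h])
    exact .tail (.single ⟨ha.1, hσ₀, fun h => ha.2 h.symm, haσ₀⟩) ⟨hσ₀, hb.1, hb.2, hσ₀b⟩
  · exact .single ⟨ha.1, hb.1, hba, hab⟩

theorem union_sdiff_eq (hσ₀ : σ₀ ∈ M.A) :
    (M.A \ {σ₀}) ∪ (M.B \ {M.m σ₀}) ∪ M.C = Set.univ \ {σ₀, M.m σ₀} := by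
  have hmσ₀ : M.m σ₀ ∈ M.B := M.bij.mapsTo hσ₀
  ext x
  have hx : x ∈ M.A ∪ M.B ∪ M.C := M.cover ▸ Set.mem_univ x
  have hAB := Set.disjoint_left.1 M.disjAB
  have hAC := Set.disjoint_left.1 M.disjAC
  have hBC := Set.disjoint_left.1 M.disjBC
  simp only [Set.mem_union, Set.mem_sdiff, Set.mem_singleton_iff, Set.mem_univ,
    Set.mem_insert_iff, true_and] at hx ⊢
  constructor
  · rintro ((⟨hxA, hxσ₀⟩ | ⟨hxB, hxm⟩) | hxC) (rfl | rfl)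
    exacts [hxσ₀ rfl, hAB hxA hmσ₀, hAB hσ₀ hxB, hxm rfl, hAC hσ₀ hxC, hBC hmσ₀ hxC]
  · intro hne
    push Not at hne
    rcases hx with (hxA | hxB) | hxC
    exacts [.inl (.inl ⟨hxA, hne.1⟩), .inl (.inr ⟨hxB, hne.2⟩), .inr hxC]

end PartialMatching

theorem stmt5_general {R S : Type*} [CommRing R] [Fintype S] [DecidableEq S]
    (X : SComplex R S) (M : PartialMatching X)
    (hac : M.Acyclic) {σ₀ : S} (hσ₀ : σ₀ ∈ M.A) :
    ((M.A \ {σ₀}) ∪ (M.B \ {M.m σ₀}) ∪ M.C = Set.univ \ {σ₀, M.m σ₀}) ∧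
    Disjoint (M.A \ {σ₀}) (M.B \ {M.m σ₀}) ∧
    Disjoint (M.A \ {σ₀}) M.C ∧
    Disjoint (M.B \ {M.m σ₀}) M.C ∧
    Set.BijOn M.m (M.A \ {σ₀}) (M.B \ {M.m σ₀}) ∧
    (∀ τ ∈ M.A \ {σ₀}, IsUnit (reducedKappa X M σ₀ (M.m τ) τ)) ∧
    ¬ ∃ (p : ℕ) (σ : ℕ → S), (∀ i ≤ p, σ i ∈ M.A \ {σ₀}) ∧ σ (p + 1) = σ 0 ∧
        ∀ i ≤ p, σ (i + 1) ≠ σ i ∧ reducedKappa X M σ₀ (M.m (σ i)) (σ (i + 1)) ≠ 0 := by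
  refine ⟨M.union_sdiff_eq hσ₀, M.disjAB.mono Set.sdiff_subset Set.sdiff_subset,
    M.disjAC.mono_left Set.sdiff_subset, M.disjBC.mono_left Set.sdiff_subset,
    M.bij.sdiff_singleton hσ₀, fun τ hτ => ?_, ?_⟩
  · rw [PartialMatching.reducedKappa_m_self hac hσ₀ hτ]
    exact M.unit τ hτ.1
  · rw [not_exists_cycle_iff]
    intro a hcycle
    exact PartialMatching.acyclic_iff.1 hac a <|
      TransGen.closed (fun _ _ => PartialMatching.transGen_of_reduced_matchingStep hσ₀) _ _ hcycle

/-- the restriction `(Ā, B̄, C̄, m̄)` of an acyclic partial matching, with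
`Ā = A \ {σ₀}`, `B̄ = B \ {m σ₀}`, `C̄ = C`, is an acyclic partial matching on the
reduced `S`-complex `(S̄, κ̄)`, where `S̄ = S \ {σ₀, m σ₀}`. -/
theorem stmt5 {R S : Type*} [CommRing R] [IsDomain R] [IsPrincipalIdealRing R]
    [Fintype S] [DecidableEq S] (X : SComplex R S) (M : PartialMatching X)
    (hac : M.Acyclic) {σ₀ : S} (hσ₀ : σ₀ ∈ M.A) :
    ((M.A \ {σ₀}) ∪ (M.B \ {M.m σ₀}) ∪ M.C = Set.univ \ {σ₀, M.m σ₀}) ∧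
    Disjoint (M.A \ {σ₀}) (M.B \ {M.m σ₀}) ∧
    Disjoint (M.A \ {σ₀}) M.C ∧
    Disjoint (M.B \ {M.m σ₀}) M.C ∧
    Set.BijOn M.m (M.A \ {σ₀}) (M.B \ {M.m σ₀}) ∧
    (∀ τ ∈ M.A \ {σ₀}, IsUnit (reducedKappa X M σ₀ (M.m τ) τ)) ∧
    ¬ ∃ (p : ℕ) (σ : ℕ → S), (∀ i ≤ p, σ i ∈ M.A \ {σ₀}) ∧ σ (p + 1) = σ 0 ∧
        ∀ i ≤ p, σ (i + 1) ≠ σ i ∧ reducedKappa X M σ₀ (M.m (σ i)) (σ (i + 1)) ≠ 0 :=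
  stmt5_general X M hac hσ₀
end

section
/- Let (S, κ) be an S-complex over a PID R, (A, B, C, m) a partial matching, σ ∈ A, and (S̄, κ̄) the reduction at the pair (m(σ), σ). Then the reduced boundary operator ∂̄ defined by κ̄ satisfies ∂̄ ∘ ∂̄ = 0, i.e., (C_*(S̄), ∂̄) is a chain complex. -/
/-- the reduced boundary operator squares to zero, i.e. for all
`η, ξ ∈ S̄ = S \ {σ₀, m σ₀}`, `∑_{τ ∈ S̄} κ̄(η, τ)·κ̄(τ, ξ) = 0`. -/
theorem stmt6 {R S : Type*} [CommRing R] [IsDomain R] [IsPrincipalIdealRing R]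
    [Fintype S] [DecidableEq S] (X : SComplex R S) (M : PartialMatching X)
    {σ₀ : S} (hσ₀ : σ₀ ∈ M.A) {η ξ : S}
    (hη : η ≠ σ₀ ∧ η ≠ M.m σ₀) (hξ : ξ ≠ σ₀ ∧ ξ ≠ M.m σ₀) :
    ∑ τ ∈ Finset.univ.filter (fun τ => τ ≠ σ₀ ∧ τ ≠ M.m σ₀),
        reducedKappa X M σ₀ η τ * reducedKappa X M σ₀ τ ξ = 0 := by
  have hu := M.unit σ₀ hσ₀
  set a := M.m σ₀ with ha
  set u := Ring.inverse (X.κ a σ₀) with hudef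
  have huc : u * X.κ a σ₀ = 1 := Ring.inverse_mul_cancel _ hu
  have hcu : X.κ a σ₀ * u = 1 := Ring.mul_inverse_cancel _ hu
  -- terms at σ₀ and a vanish, so we may sum over all of S
  have hzero : ∀ τ ∈ Finset.univ, τ ∉ Finset.univ.filter (fun τ => τ ≠ σ₀ ∧ τ ≠ a) →
      reducedKappa X M σ₀ η τ * reducedKappa X M σ₀ τ ξ = 0 := by
    intro τ _ hτ
    simp only [Finset.mem_filter, Finset.mem_univ, true_and, not_and_or, not_not] at hτ
    rcases hτ with h | h
    · rw [h]
      have hz : reducedKappa X M σ₀ η σ₀ = 0 := by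
        simp only [reducedKappa, ← ha, ← hudef, mul_assoc, huc, mul_one, sub_self]
      rw [hz, zero_mul]
    · rw [h]
      have hz : reducedKappa X M σ₀ a ξ = 0 := by
        simp only [reducedKappa, ← ha, ← hudef]
        rw [hcu, one_mul, sub_self]
      rw [hz, mul_zero]
  rw [Finset.sum_subset (Finset.filter_subset _ Finset.univ) hzero]
  have key : ∀ τ : S, reducedKappa X M σ₀ η τ * reducedKappa X M σ₀ τ ξ =
      X.κ η τ * X.κ τ ξ - (X.κ η τ * X.κ τ σ₀) * (u * X.κ a ξ)
        - (X.κ η σ₀ * u) * (X.κ a τ * X.κ τ ξ)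
        + ((X.κ η σ₀ * u) * (X.κ a τ * X.κ τ σ₀)) * (u * X.κ a ξ) := by
    intro τ; simp only [reducedKappa, ← ha, ← hudef]; ring
  simp only [key, Finset.sum_sub_distrib, Finset.sum_add_distrib, ← Finset.sum_mul,
    ← Finset.mul_sum]
  rw [X.dsq η ξ, X.dsq η σ₀, X.dsq a ξ, X.dsq a σ₀]
  ring
end

section
/- With notation as in the reduction of an S-complex at a matched pair (m(σ), σ): the maps π : C_*(S) → C_*(S̄) and ι : C_*(S̄) → C_*(S) are chain maps, i.e., π ∘ ∂ = ∂̄ ∘ π and ι ∘ ∂̄ = ∂ ∘ ι. -/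
/-- The boundary operator induced by a coincidence index `κ` on chains (written in
coordinates): `(∂c)(ξ) = ∑_η c(η)·κ(η, ξ)`. -/
noncomputable def bdryF {R S : Type*} [CommRing R] [Fintype S]
    (κ : S → S → R) (c : S → R) : S → R :=
  fun ξ => ∑ η, c η * κ η ξ

/-- The reduced coincidence index extended by zero on the removed pair `{σ₀, m σ₀}`,
modelling the coincidence index of the reduced complex `S̄ = S \ {σ₀, m σ₀}`. -/
noncomputable def reducedKappaZ {R S : Type*} [CommRing R] [Fintype S] [DecidableEq S]
    (X : SComplex R S) (M : PartialMatching X) (σ₀ : S) : S → S → R :=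
  fun η ξ => if η = σ₀ ∨ η = M.m σ₀ ∨ ξ = σ₀ ∨ ξ = M.m σ₀ then 0
    else reducedKappa X M σ₀ η ξ

/-- The projection `π : C_*(S) → C_*(S̄)`, determined on generators by
`π(m σ₀) = 0`, `π(σ₀) = −∑_{ξ ∈ S̄} (κ(m σ₀, ξ)/κ(m σ₀, σ₀))·ξ`, `π(τ) = τ` otherwise. -/
noncomputable def piMap {R S : Type*} [CommRing R] [Fintype S] [DecidableEq S]
    (X : SComplex R S) (M : PartialMatching X) (σ₀ : S) (c : S → R) : S → R :=
  fun ξ => if ξ = σ₀ ∨ ξ = M.m σ₀ then 0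
    else c ξ - c σ₀ * (Ring.inverse (X.κ (M.m σ₀) σ₀) * X.κ (M.m σ₀) ξ)

/-- The inclusion `ι : C_*(S̄) → C_*(S)`, determined on generators by
`ι(τ) = τ − (κ(τ, σ₀)/κ(m σ₀, σ₀))·(m σ₀)`. -/
noncomputable def iotaMap {R S : Type*} [CommRing R] [Fintype S] [DecidableEq S]
    (X : SComplex R S) (M : PartialMatching X) (σ₀ : S) (c : S → R) : S → R :=
  fun ξ => c ξ -
    (if ξ = M.m σ₀ then Ring.inverse (X.κ (M.m σ₀) σ₀) * ∑ τ, c τ * X.κ τ σ₀ else 0)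

/-- The chain homotopy `D`, determined on generators by `D(σ₀) = (m σ₀)/κ(m σ₀, σ₀)`
and `D(τ) = 0` for `τ ≠ σ₀`. -/
noncomputable def dMap {R S : Type*} [CommRing R] [Fintype S] [DecidableEq S]
    (X : SComplex R S) (M : PartialMatching X) (σ₀ : S) (c : S → R) : S → R :=
  fun ξ => if ξ = M.m σ₀ then Ring.inverse (X.κ (M.m σ₀) σ₀) * c σ₀ else 0

/-!
Write `μ = m σ₀`. The map `p c = c − (c(σ₀)/κ(μ, σ₀))·∂μ` kills the `σ₀`-coordinate, is
unchanged by adding multiples of `∂μ`, and satisfies `∂ ∘ p = ∂` because `∂∂ = 0`. In these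
terms `π` is `p` followed by discarding the coordinates `σ₀, μ`; `∂̄` is `p ∘ ∂` applied to a
chain supported off `{σ₀, μ}`, again followed by discarding; and `∂ ∘ ι = p ∘ ∂`. Discarding
the `μ`-coordinate of a chain whose `σ₀`-coordinate vanishes only adds a multiple of `μ`, which
changes neither `p ∘ ∂` nor `ι`, and `ι` fixes every boundary; both identities follow.
-/

open Matrix

section Boundary

variable {R S : Type*} [CommRing R] [Fintype S]

theorem bdryF_eq_vecMul (κ : S → S → R) (c : S → R) : bdryF κ c = c ᵥ* Matrix.of κ := rfl

theorem bdryF_add (κ : S → S → R) (c d : S → R) :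
    bdryF κ (c + d) = bdryF κ c + bdryF κ d :=
  add_vecMul _ c d

theorem bdryF_single [DecidableEq S] (κ : S → S → R) (η : S) (a : R) :
    bdryF κ (Pi.single η a) = a • κ η :=
  single_vecMul _ η a

theorem SComplex.bdryF_bdryF [DecidableEq S] (X : SComplex R S) (c : S → R) :
    bdryF X.κ (bdryF X.κ c) = 0 := by
  have hsq : Matrix.of X.κ * Matrix.of X.κ = 0 := Matrix.ext X.dsq
  simp only [bdryF_eq_vecMul, vecMul_vecMul, hsq, vecMul_zero]

end Boundary

theorem Set.indicator_compl_pair_eq_add_single {S G : Type*} [DecidableEq S] [AddGroup G]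
    {a b : S} {y : S → G} (hy : y a = 0) :
    ({a, b}ᶜ : Set S).indicator y = y + Pi.single b (-y b) := by
  funext ξ
  by_cases hb : ξ = b
  · subst hb; simp
  by_cases ha : ξ = a
  · subst ha; simp [hy, hb]
  · simp [ha, hb]

section ClearPivot

variable {R S : Type*} [CommRing R]

noncomputable def clearPivot (κ : S → S → R) (μ σ₀ : S) (c : S → R) : S → R :=
  c - (c σ₀ * Ring.inverse (κ μ σ₀)) • κ μ

variable {κ : S → S → R} {μ σ₀ : S}

theorem clearPivot_apply_pivot (hu : IsUnit (κ μ σ₀)) (c : S → R) :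
    clearPivot κ μ σ₀ c σ₀ = 0 := by
  simp [clearPivot, mul_assoc, Ring.inverse_mul_cancel _ hu]

theorem clearPivot_add_smul_row (hu : IsUnit (κ μ σ₀)) (c : S → R) (a : R) :
    clearPivot κ μ σ₀ (c + a • κ μ) = clearPivot κ μ σ₀ c := by
  have h := Ring.mul_inverse_cancel _ hu
  funext ξ
  simp only [clearPivot, Pi.sub_apply, Pi.add_apply, Pi.smul_apply, smul_eq_mul]
  linear_combination (-(a * κ μ ξ)) * h

theorem SComplex.bdryF_clearPivot [Fintype S] [DecidableEq S] (X : SComplex R S) (μ σ₀ : S)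
    (c : S → R) : bdryF X.κ (clearPivot X.κ μ σ₀ c) = bdryF X.κ c := by
  rw [clearPivot, sub_eq_add_neg, ← neg_smul, bdryF_add, ← bdryF_single, X.bdryF_bdryF, add_zero]

end ClearPivot

section Reduction

variable {R S : Type*} [CommRing R] [Fintype S] [DecidableEq S]
  (X : SComplex R S) (M : PartialMatching X) (σ₀ : S)

theorem piMap_eq_indicator (c : S → R) :
    piMap X M σ₀ c = ({σ₀, M.m σ₀}ᶜ : Set S).indicator (clearPivot X.κ (M.m σ₀) σ₀ c) := by
  funext ξ
  by_cases hξ : ξ = σ₀ ∨ ξ = M.m σ₀ <;> simp [piMap, clearPivot, hξ, mul_assoc]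

theorem bdryF_reducedKappa (c : S → R) :
    bdryF (reducedKappa X M σ₀) c = clearPivot X.κ (M.m σ₀) σ₀ (bdryF X.κ c) := by
  funext ξ
  simp only [bdryF, reducedKappa, clearPivot, Pi.sub_apply, Pi.smul_apply, smul_eq_mul,
    mul_sub, Finset.sum_sub_distrib, Finset.sum_mul]
  congr 1
  exact Finset.sum_congr rfl fun η _ => by ring

theorem bdryF_reducedKappaZ (c : S → R) :
    bdryF (reducedKappaZ X M σ₀) c = ({σ₀, M.m σ₀}ᶜ : Set S).indicator
      (bdryF (reducedKappa X M σ₀) (({σ₀, M.m σ₀}ᶜ : Set S).indicator c)) := by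
  funext ξ
  by_cases hξ : ξ = σ₀ ∨ ξ = M.m σ₀
  · simp [bdryF, reducedKappaZ, hξ]
  · simp only [bdryF, reducedKappaZ, Set.indicator, Set.mem_compl_iff, Set.mem_insert_iff,
      Set.mem_singleton_iff, hξ, if_true, not_false_eq_true, or_false]
    refine Finset.sum_congr rfl fun η _ => ?_
    split_ifs <;> simp

theorem iotaMap_eq (c : S → R) :
    iotaMap X M σ₀ c =
      c - Pi.single (M.m σ₀) (Ring.inverse (X.κ (M.m σ₀) σ₀) * bdryF X.κ c σ₀) := by
  funext ξ
  by_cases hξ : ξ = M.m σ₀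
  · subst hξ; simp [iotaMap, bdryF]
  · simp [iotaMap, hξ]

variable {X M σ₀}

theorem bdryF_iotaMap (c : S → R) :
    bdryF X.κ (iotaMap X M σ₀ c) = clearPivot X.κ (M.m σ₀) σ₀ (bdryF X.κ c) := by
  rw [iotaMap_eq, sub_eq_add_neg, ← Pi.single_neg, bdryF_add, bdryF_single, clearPivot]
  funext ξ
  simp only [Pi.add_apply, Pi.sub_apply, Pi.smul_apply, smul_eq_mul]
  ring

theorem iotaMap_add_single (hu : IsUnit (X.κ (M.m σ₀) σ₀)) (c : S → R) (a : R) :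
    iotaMap X M σ₀ (c + Pi.single (M.m σ₀) a) = iotaMap X M σ₀ c := by
  have h := Ring.inverse_mul_cancel _ hu
  rw [iotaMap_eq, iotaMap_eq, bdryF_add, bdryF_single]
  funext ξ
  by_cases hξ : ξ = M.m σ₀
  · subst hξ
    simp only [Pi.add_apply, Pi.sub_apply, Pi.smul_apply, Pi.single_eq_same, smul_eq_mul]
    linear_combination (-a) * h
  · simp [hξ]

theorem iotaMap_of_bdryF_apply_eq_zero {c : S → R} (hc : bdryF X.κ c σ₀ = 0) :
    iotaMap X M σ₀ c = c := by
  simp [iotaMap_eq, hc]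

theorem piMap_bdryF (hu : IsUnit (X.κ (M.m σ₀) σ₀)) (c : S → R) :
    piMap X M σ₀ (bdryF X.κ c) = bdryF (reducedKappaZ X M σ₀) (piMap X M σ₀ c) := by
  rw [bdryF_reducedKappaZ, piMap_eq_indicator, piMap_eq_indicator, Set.indicator_indicator,
    Set.inter_self, Set.indicator_compl_pair_eq_add_single (clearPivot_apply_pivot hu c),
    bdryF_reducedKappa, bdryF_add, bdryF_single, clearPivot_add_smul_row hu, X.bdryF_clearPivot]

theorem iotaMap_bdryF_reducedKappaZ (hu : IsUnit (X.κ (M.m σ₀) σ₀)) {c : S → R}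
    (hσ₀ : c σ₀ = 0) (hm : c (M.m σ₀) = 0) :
    iotaMap X M σ₀ (bdryF (reducedKappaZ X M σ₀) c) = bdryF X.κ (iotaMap X M σ₀ c) := by
  have hc : ({σ₀, M.m σ₀}ᶜ : Set S).indicator c = c :=
    Set.indicator_eq_self.2 <| Function.support_subset_iff'.2 fun ξ hξ => by
      rcases Set.notMem_compl_iff.1 hξ with rfl | rfl <;> assumption
  have hpivot : bdryF X.κ (iotaMap X M σ₀ c) σ₀ = 0 := by
    rw [bdryF_iotaMap]
    exact clearPivot_apply_pivot hu _
  have hcycle : bdryF X.κ (bdryF X.κ (iotaMap X M σ₀ c)) σ₀ = 0 := by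
    rw [X.bdryF_bdryF]
    rfl
  rw [bdryF_reducedKappaZ, hc, bdryF_reducedKappa, ← bdryF_iotaMap,
    Set.indicator_compl_pair_eq_add_single hpivot, iotaMap_add_single hu,
    iotaMap_of_bdryF_apply_eq_zero hcycle]

end Reduction

theorem stmt7_general {R S : Type*} [CommRing R]
    [Fintype S] [DecidableEq S] (X : SComplex R S) (M : PartialMatching X)
    {σ₀ : S} (hσ₀ : σ₀ ∈ M.A) :
    (∀ c : S → R,
        piMap X M σ₀ (bdryF X.κ c) = bdryF (reducedKappaZ X M σ₀) (piMap X M σ₀ c)) ∧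
    (∀ c : S → R, c σ₀ = 0 → c (M.m σ₀) = 0 →
        iotaMap X M σ₀ (bdryF (reducedKappaZ X M σ₀) c) =
          bdryF X.κ (iotaMap X M σ₀ c)) :=
  ⟨piMap_bdryF (M.unit σ₀ hσ₀), fun _ => iotaMap_bdryF_reducedKappaZ (M.unit σ₀ hσ₀)⟩

/-- `π` and `ι` are chain maps, i.e. `π ∘ ∂ = ∂̄ ∘ π` on `C_*(S)` and
`ι ∘ ∂̄ = ∂ ∘ ι` on `C_*(S̄)` (chains supported away from the removed pair). -/
theorem stmt7 {R S : Type*} [CommRing R] [IsDomain R] [IsPrincipalIdealRing R]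
    [Fintype S] [DecidableEq S] (X : SComplex R S) (M : PartialMatching X)
    {σ₀ : S} (hσ₀ : σ₀ ∈ M.A) :
    (∀ c : S → R,
        piMap X M σ₀ (bdryF X.κ c) = bdryF (reducedKappaZ X M σ₀) (piMap X M σ₀ c)) ∧
    (∀ c : S → R, c σ₀ = 0 → c (M.m σ₀) = 0 →
        iotaMap X M σ₀ (bdryF (reducedKappaZ X M σ₀) c) =
          bdryF X.κ (iotaMap X M σ₀ c)) :=
  stmt7_general X M hσ₀
end

section
/- Let (A, B, C, m) be an acyclic partial matching on a multifiltered S-complex (S, κ) with the property that σ ∈ S^α implies m(σ) ∈ S^α. Fix σ₀ ∈ A and let (S̄, κ̄) be the reduction at (m(σ₀), σ₀), with the induced multifiltration S̄^α = S̄ ∩ S^α. Then π(C_*(S^α)) ⊆ C_*(S̄^α), ι(C_*(S̄^α)) ⊆ C_*(S^α), and D(C_q(S^α)) ⊆ C_{q+1}(S^α) for every α ∈ ℝ^k and every q. -/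
/-- for a filtration-compatible acyclic matching, the reduction maps
`π`, `ι`, `D` respect the multifiltration: `π` maps chains supported in `S^α` to
chains supported in `S̄^α = S^α \ {σ₀, m σ₀}`, `ι` maps chains supported in `S̄^α` to
chains supported in `S^α`, and `D` maps chains supported in `S^α` to chains
supported in `S^α`. -/
theorem stmt9 {R S : Type*} [CommRing R] [IsDomain R] [IsPrincipalIdealRing R]
    [Fintype S] [DecidableEq S] {k : ℕ} (X : SComplex R S) (M : PartialMatching X)
    (hac : M.Acyclic)
    (F : (Fin k → ℝ) → Set S)
    (hmono : ∀ α β : Fin k → ℝ, α ≤ β → F α ⊆ F β)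
    (hface : ∀ (α : Fin k → ℝ) (σ τ : S), σ ∈ F α → X.κ σ τ ≠ 0 → τ ∈ F α)
    (hcompat : ∀ (α : Fin k → ℝ), ∀ σ ∈ M.A, σ ∈ F α → M.m σ ∈ F α)
    {σ₀ : S} (hσ₀ : σ₀ ∈ M.A) :
    (∀ (α : Fin k → ℝ) (c : S → R), (∀ τ, τ ∉ F α → c τ = 0) →
        ∀ τ, τ ∉ F α \ {σ₀, M.m σ₀} → piMap X M σ₀ c τ = 0) ∧
    (∀ (α : Fin k → ℝ) (c : S → R), (∀ τ, τ ∉ F α \ {σ₀, M.m σ₀} → c τ = 0) →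
        ∀ τ, τ ∉ F α → iotaMap X M σ₀ c τ = 0) ∧
    (∀ (α : Fin k → ℝ) (c : S → R), (∀ τ, τ ∉ F α → c τ = 0) →
        ∀ τ, τ ∉ F α → dMap X M σ₀ c τ = 0) := by
  refine ⟨?_, ?_, ?_⟩
  · intro α c hc τ hτ
    unfold piMap
    split_ifs with h
    · rfl
    · push_neg at h
      have hτF : τ ∉ F α := by
        intro hmem
        exact hτ ⟨hmem, by simp [h.1, h.2]⟩
      rw [hc τ hτF]
      by_cases hσF : σ₀ ∈ F α
      · have hmF : M.m σ₀ ∈ F α := hcompat α σ₀ hσ₀ hσF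
        have : X.κ (M.m σ₀) τ = 0 := by
          by_contra hk
          exact hτF (hface α _ _ hmF hk)
        simp [this]
      · simp [hc σ₀ hσF]
  · intro α c hc τ hτ
    unfold iotaMap
    have hcτ : c τ = 0 := hc τ (fun ⟨h1, _⟩ => hτ h1)
    rw [hcτ]
    split_ifs with h
    · subst h
      have hsum : ∀ ξ, c ξ * X.κ ξ σ₀ = 0 := by
        intro ξ
        by_cases hcξ : c ξ = 0
        · simp [hcξ]
        · have hξ : ξ ∈ F α \ {σ₀, M.m σ₀} := by
            by_contra hn; exact hcξ (hc ξ hn)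
          have hk : X.κ ξ σ₀ = 0 := by
            by_contra hk
            have hσF : σ₀ ∈ F α := hface α _ _ hξ.1 hk
            exact hτ (hcompat α σ₀ hσ₀ hσF)
          simp [hk]
      simp [Finset.sum_congr rfl (fun ξ _ => hsum ξ)]
    · ring
  · intro α c hc τ hτ
    unfold dMap
    split_ifs with h
    · subst h
      have hσF : σ₀ ∉ F α := fun hm => hτ (hcompat α σ₀ hσ₀ hm)
      simp [hc σ₀ hσF]
    · rfl
end

section
/- Under the assumptions of the filtration-compatible reduction, for every α ⪯ β in ℝ^k and every q, the q-th persistent homology group H_q^{α,β}(S) = im(H_q(S^α) → H_q(S^β)) is isomorphic to H_q^{α,β}(S̄), via the isomorphisms induced by π which commute with the inclusion-induced maps. -/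
/-- The boundary operator induced by a coincidence index `κ`, as a linear
endomorphism of the free module `C_*(S) = S →₀ R`. -/
noncomputable def bdryL {R S : Type*} [CommRing R] [Fintype S] [DecidableEq S]
    (κ : S → S → R) : (S →₀ R) →ₗ[R] (S →₀ R) :=
  Finsupp.lsum R fun η =>
    LinearMap.toSpanSingleton R (S →₀ R) (∑ ξ, Finsupp.single ξ (κ η ξ))

/-- The submodule of cycles supported in `T` (typically `T = S^α ∩ {dim = q}`). -/
noncomputable def cyclesIn {R S : Type*} [CommRing R] [Fintype S] [DecidableEq S]
    (κ : S → S → R) (T : Set S) : Submodule R (S →₀ R) :=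
  Finsupp.supported R R T ⊓ LinearMap.ker (bdryL κ)

/-- The submodule of boundaries of chains supported in `T`
(typically `T = S^β ∩ {dim = q+1}`). -/
noncomputable def bdriesIn {R S : Type*} [CommRing R] [Fintype S] [DecidableEq S]
    (κ : S → S → R) (T : Set S) : Submodule R (S →₀ R) :=
  Submodule.map (bdryL κ) (Finsupp.supported R R T)

/-- The `q`-th persistent homology module of a filtered complex at `(α, β)`: the image
of the module of `q`-cycles of `S^α` (`Tz = S^α ∩ {dim = q}`) in the quotient by the
boundaries coming from `S^β` (`Tb = S^β ∩ {dim = q+1}`); this realizes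
`im (H_q(S^α) → H_q(S^β)) ≅ Z_q^α / (Z_q^α ∩ B_q^β)`. -/
abbrev persHom {R S : Type*} [CommRing R] [Fintype S] [DecidableEq S]
    (κ : S → S → R) (Tz Tb : Set S) : Type _ :=
  ↥(Submodule.map (bdriesIn κ Tb).mkQ (cyclesIn κ Tz))

section Aux
variable {R S : Type*} [CommRing R] [Fintype S] [DecidableEq S]

lemma bdryL_apply (κ : S → S → R) (c : S →₀ R) (ξ : S) :
    bdryL κ c ξ = ∑ η, c η * κ η ξ := by
  classical
  rw [bdryL, Finsupp.lsum_apply, Finsupp.sum, Finsupp.finset_sum_apply]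
  have h1 : ∀ η, (LinearMap.toSpanSingleton R (S →₀ R)
      (∑ ξ', Finsupp.single ξ' (κ η ξ')) (c η)) ξ = c η * κ η ξ := by
    intro η
    rw [LinearMap.toSpanSingleton_apply, Finsupp.smul_apply, Finsupp.finset_sum_apply]
    simp [Finsupp.single_apply, Finset.sum_ite_eq', smul_eq_mul]
  rw [Finset.sum_congr rfl fun η _ => h1 η]
  exact Finset.sum_subset (Finset.subset_univ _) (by
    intro η _ hη
    rw [Finsupp.notMem_support_iff] at hη
    rw [hη, zero_mul])

lemma bdryL_single (κ : S → S → R) (η : S) (r : R) (ξ : S) :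
    bdryL κ (Finsupp.single η r) ξ = r * κ η ξ := by
  rw [bdryL_apply]
  simp [Finsupp.single_apply, Finset.sum_ite_eq, ite_mul]

lemma bdryL_bdryL (X : SComplex R S) (c : S →₀ R) :
    bdryL X.κ (bdryL X.κ c) = 0 := by
  ext ξ
  rw [bdryL_apply]
  rw [Finset.sum_congr rfl fun τ _ => by rw [bdryL_apply X.κ c τ, Finset.sum_mul]]
  rw [Finset.sum_comm]
  rw [Finset.sum_congr rfl fun η _ => by
    rw [Finset.sum_congr rfl fun τ (_ : τ ∈ Finset.univ) => (mul_assoc (c η) _ _),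
      ← Finset.mul_sum, X.dsq η ξ, mul_zero]]
  simp

end Aux

section Aux2
variable {R S : Type*} [CommRing R] [Fintype S] [DecidableEq S]

/-- The chain `E = ∂(m σ₀)`. -/
noncomputable def EE (X : SComplex R S) (M : PartialMatching X) (σ₀ : S) : S →₀ R :=
  bdryL X.κ (Finsupp.single (M.m σ₀) 1)

lemma EE_apply (X : SComplex R S) (M : PartialMatching X) (σ₀ ξ : S) :
    EE X M σ₀ ξ = X.κ (M.m σ₀) ξ := by
  rw [EE, bdryL_single, one_mul]

variable (X : SComplex R S) (M : PartialMatching X) {σ₀ : S}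

lemma mne (hσ₀ : σ₀ ∈ M.A) : M.m σ₀ ≠ σ₀ := by
  intro h
  exact (Set.disjoint_left.mp M.disjAB hσ₀) (h ▸ M.bij.mapsTo hσ₀)

lemma hul (hσ₀ : σ₀ ∈ M.A) :
    Ring.inverse (X.κ (M.m σ₀) σ₀) * X.κ (M.m σ₀) σ₀ = 1 :=
  Ring.inverse_mul_cancel _ (M.unit σ₀ hσ₀)

lemma lamne [Nontrivial R] (hσ₀ : σ₀ ∈ M.A) : X.κ (M.m σ₀) σ₀ ≠ 0 :=
  (M.unit σ₀ hσ₀).ne_zero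

lemma dim_m [Nontrivial R] (hσ₀ : σ₀ ∈ M.A) : X.dim (M.m σ₀) = X.dim σ₀ + 1 :=
  X.dim_rule _ _ (lamne X M hσ₀)

lemma kaa : X.κ (M.m σ₀) (M.m σ₀) = 0 := by
  by_contra h
  exact Nat.succ_ne_self _ (X.dim_rule _ _ h).symm

lemma keybar (hσ₀ : σ₀ ∈ M.A) (x : S →₀ R) (hxb : x σ₀ = 0) (hxa : x (M.m σ₀) = 0) :
    bdryL (reducedKappaZ X M σ₀) x =
      bdryL X.κ x
        - (Ring.inverse (X.κ (M.m σ₀) σ₀) * (bdryL X.κ x) σ₀) • EE X M σ₀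
        - ((bdryL X.κ x) (M.m σ₀)) • Finsupp.single (M.m σ₀) 1 := by
  have hne := mne X M hσ₀
  have hu := hul X M hσ₀
  ext ξ
  simp only [Finsupp.sub_apply, Finsupp.smul_apply, smul_eq_mul, bdryL_apply,
    EE_apply]
  rw [Finset.mul_sum, Finset.sum_mul, Finset.sum_mul, ← Finset.sum_sub_distrib,
    ← Finset.sum_sub_distrib]
  refine Finset.sum_congr rfl fun η _ => ?_
  by_cases hx : x η = 0
  · simp [hx]
  have hηb : η ≠ σ₀ := fun h => hx (h ▸ hxb)
  have hηa : η ≠ M.m σ₀ := fun h => hx (h ▸ hxa)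
  by_cases hξb : ξ = σ₀
  · rw [reducedKappaZ, if_pos (Or.inr (Or.inr (Or.inl hξb)))]
    rw [hξb, Finsupp.single_apply, if_neg hne]
    linear_combination (x η * X.κ η σ₀) * hu
  · by_cases hξa : ξ = M.m σ₀
    · rw [reducedKappaZ, if_pos (Or.inr (Or.inr (Or.inr hξa)))]
      rw [hξa, Finsupp.single_apply, if_pos rfl, kaa X M]
      ring
    · rw [reducedKappaZ, if_neg (by tauto), reducedKappa]
      rw [Finsupp.single_apply, if_neg (fun h => hξa h.symm)]
      ring

lemma EE_b (hσ₀ : σ₀ ∈ M.A) : EE X M σ₀ σ₀ = X.κ (M.m σ₀) σ₀ := EE_apply X M σ₀ σ₀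

lemma EE_a : EE X M σ₀ (M.m σ₀) = 0 := by rw [EE_apply, kaa]

lemma bdry_EE : bdryL X.κ (EE X M σ₀) = 0 := bdryL_bdryL X _

lemma bdry_single_a (r : R) :
    bdryL X.κ (Finsupp.single (M.m σ₀) r) = r • EE X M σ₀ := by
  ext ξ
  rw [bdryL_single, Finsupp.smul_apply, EE_apply, smul_eq_mul]

end Aux2

section Aux3
variable {R S : Type*} [CommRing R] [Fintype S] [DecidableEq S]

/-- The projection chain map `π`. -/
noncomputable def piM (X : SComplex R S) (M : PartialMatching X) (σ₀ : S) :
    (S →₀ R) →ₗ[R] (S →₀ R) :=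
  LinearMap.id
    - LinearMap.smulRight (Ring.inverse (X.κ (M.m σ₀) σ₀) • Finsupp.lapply σ₀)
        (EE X M σ₀)
    - LinearMap.smulRight (Finsupp.lapply (M.m σ₀)) (Finsupp.single (M.m σ₀) 1)

/-- The inclusion chain map `ι`. -/
noncomputable def iotaM (X : SComplex R S) (M : PartialMatching X) (σ₀ : S) :
    (S →₀ R) →ₗ[R] (S →₀ R) :=
  LinearMap.id
    - LinearMap.smulRight
        (Ring.inverse (X.κ (M.m σ₀) σ₀) • (Finsupp.lapply σ₀ ∘ₗ bdryL X.κ))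
        (Finsupp.single (M.m σ₀) 1)

variable (X : SComplex R S) (M : PartialMatching X) {σ₀ : S}

lemma piM_apply (c : S →₀ R) :
    piM X M σ₀ c = c - (Ring.inverse (X.κ (M.m σ₀) σ₀) * c σ₀) • EE X M σ₀
      - c (M.m σ₀) • Finsupp.single (M.m σ₀) 1 := by
  simp [piM, LinearMap.sub_apply, LinearMap.smulRight_apply, smul_smul]

lemma iotaM_apply (c : S →₀ R) :
    iotaM X M σ₀ c = c - (Ring.inverse (X.κ (M.m σ₀) σ₀) * (bdryL X.κ c) σ₀) •
      Finsupp.single (M.m σ₀) 1 := by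
  simp [iotaM, LinearMap.sub_apply, LinearMap.smulRight_apply, smul_smul]

lemma piM_b (hσ₀ : σ₀ ∈ M.A) (c : S →₀ R) : piM X M σ₀ c σ₀ = 0 := by
  rw [piM_apply]
  simp only [Finsupp.sub_apply, Finsupp.smul_apply, smul_eq_mul, EE_b X M hσ₀,
    Finsupp.single_apply, if_neg (mne X M hσ₀)]
  linear_combination (-(c σ₀)) * hul X M hσ₀

lemma piM_a (c : S →₀ R) : piM X M σ₀ c (M.m σ₀) = 0 := by
  rw [piM_apply]
  simp [Finsupp.sub_apply, Finsupp.smul_apply, EE_a, Finsupp.single_apply]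

lemma bdry_piM (c : S →₀ R) :
    bdryL X.κ (piM X M σ₀ c) = bdryL X.κ c - c (M.m σ₀) • EE X M σ₀ := by
  rw [piM_apply, map_sub, map_sub, map_smul, map_smul, bdry_EE, smul_zero, sub_zero,
    bdry_single_a, smul_smul, mul_one]

lemma pi_chain (hσ₀ : σ₀ ∈ M.A) (c : S →₀ R) :
    bdryL (reducedKappaZ X M σ₀) (piM X M σ₀ c) = piM X M σ₀ (bdryL X.κ c) := by
  rw [keybar X M hσ₀ _ (piM_b X M hσ₀ c) (piM_a X M c), bdry_piM,
    piM_apply X M (bdryL X.κ c)]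
  have h1 : (bdryL X.κ c - c (M.m σ₀) • EE X M σ₀) σ₀
      = bdryL X.κ c σ₀ - c (M.m σ₀) * X.κ (M.m σ₀) σ₀ := by
    rw [Finsupp.sub_apply, Finsupp.smul_apply, EE_b X M hσ₀, smul_eq_mul]
  have h2 : (bdryL X.κ c - c (M.m σ₀) • EE X M σ₀) (M.m σ₀)
      = bdryL X.κ c (M.m σ₀) := by
    rw [Finsupp.sub_apply, Finsupp.smul_apply, EE_a, smul_zero, sub_zero]
  rw [h1, h2]
  have h3 : Ring.inverse (X.κ (M.m σ₀) σ₀) *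
      (bdryL X.κ c σ₀ - c (M.m σ₀) * X.κ (M.m σ₀) σ₀)
      = Ring.inverse (X.κ (M.m σ₀) σ₀) * bdryL X.κ c σ₀ - c (M.m σ₀) := by
    linear_combination (-(c (M.m σ₀))) * hul X M hσ₀
  rw [h3, sub_smul]
  module

lemma iota_chain (hσ₀ : σ₀ ∈ M.A) (x : S →₀ R) (hxb : x σ₀ = 0)
    (hxa : x (M.m σ₀) = 0) :
    bdryL X.κ (iotaM X M σ₀ x) = iotaM X M σ₀ (bdryL (reducedKappaZ X M σ₀) x) := by
  rw [iotaM_apply, map_sub, map_smul, bdry_single_a,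
    keybar X M hσ₀ _ hxb hxa, iotaM_apply]
  have h4 : bdryL X.κ (bdryL X.κ x
      - (Ring.inverse (X.κ (M.m σ₀) σ₀) * bdryL X.κ x σ₀) • EE X M σ₀
      - bdryL X.κ x (M.m σ₀) • Finsupp.single (M.m σ₀) 1)
      = - (bdryL X.κ x (M.m σ₀)) • EE X M σ₀ := by
    rw [map_sub, map_sub, map_smul, map_smul, bdryL_bdryL, bdry_EE, smul_zero,
      bdry_single_a]
    module
  rw [h4]
  have h5 : (-bdryL X.κ x (M.m σ₀) • EE X M σ₀) σ₀
      = - (bdryL X.κ x (M.m σ₀) * X.κ (M.m σ₀) σ₀) := by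
    rw [Finsupp.smul_apply, EE_b X M hσ₀, smul_eq_mul]; ring
  rw [h5]
  have h6 : Ring.inverse (X.κ (M.m σ₀) σ₀) *
      -(bdryL X.κ x (M.m σ₀) * X.κ (M.m σ₀) σ₀) = - bdryL X.κ x (M.m σ₀) := by
    linear_combination (-(bdryL X.κ x (M.m σ₀))) * hul X M hσ₀
  rw [h6]
  module

lemma pi_iota (hσ₀ : σ₀ ∈ M.A) (x : S →₀ R) (hxb : x σ₀ = 0)
    (hxa : x (M.m σ₀) = 0) : piM X M σ₀ (iotaM X M σ₀ x) = x := by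
  rw [iotaM_apply, piM_apply]
  have hb : (x - (Ring.inverse (X.κ (M.m σ₀) σ₀) * bdryL X.κ x σ₀) •
      Finsupp.single (M.m σ₀) (1:R)) σ₀ = 0 := by
    rw [Finsupp.sub_apply, Finsupp.smul_apply, hxb, Finsupp.single_apply,
      if_neg (mne X M hσ₀)]
    simp
  have ha : (x - (Ring.inverse (X.κ (M.m σ₀) σ₀) * bdryL X.κ x σ₀) •
      Finsupp.single (M.m σ₀) (1:R)) (M.m σ₀)
      = - (Ring.inverse (X.κ (M.m σ₀) σ₀) * bdryL X.κ x σ₀) := by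
    rw [Finsupp.sub_apply, Finsupp.smul_apply, hxa, Finsupp.single_apply, if_pos rfl]
    simp
  rw [hb, ha]
  module

lemma iota_pi (hσ₀ : σ₀ ∈ M.A) (c : S →₀ R) (hc : bdryL X.κ c = 0) :
    c - iotaM X M σ₀ (piM X M σ₀ c) =
      bdryL X.κ (Finsupp.single (M.m σ₀)
        (Ring.inverse (X.κ (M.m σ₀) σ₀) * c σ₀)) := by
  rw [bdry_single_a, iotaM_apply, bdry_piM, hc, piM_apply]
  have h7 : ((0:S →₀ R) - c (M.m σ₀) • EE X M σ₀) σ₀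
      = - (c (M.m σ₀) * X.κ (M.m σ₀) σ₀) := by
    rw [Finsupp.sub_apply, Finsupp.smul_apply, EE_b X M hσ₀, smul_eq_mul,
      Finsupp.coe_zero, Pi.zero_apply]; ring
  rw [h7]
  have h8 : Ring.inverse (X.κ (M.m σ₀) σ₀) *
      -(c (M.m σ₀) * X.κ (M.m σ₀) σ₀) = - c (M.m σ₀) := by
    linear_combination (-(c (M.m σ₀))) * hul X M hσ₀
  rw [h8]
  module

end Aux3


section Aux4
variable {R S : Type*} [CommRing R] [Fintype S] [DecidableEq S]
variable (X : SComplex R S) (M : PartialMatching X) {σ₀ : S}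

lemma supp_pi [Nontrivial R] (hσ₀ : σ₀ ∈ M.A) (G : Set S) (n : ℕ)
    (hfaceG : ∀ σ τ, σ ∈ G → X.κ σ τ ≠ 0 → τ ∈ G) (hmG : σ₀ ∈ G → M.m σ₀ ∈ G)
    (c : S →₀ R) (hc : c ∈ Finsupp.supported R R (G ∩ {σ | X.dim σ = n})) :
    piM X M σ₀ c ∈
      Finsupp.supported R R ((G \ {σ₀, M.m σ₀}) ∩ {σ | X.dim σ = n}) := by
  rw [Finsupp.mem_supported'] at hc ⊢
  intro ξ hξ
  by_cases hξa : ξ = M.m σ₀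
  · rw [hξa]; exact piM_a X M c
  by_cases hξb : ξ = σ₀
  · rw [hξb]; exact piM_b X M hσ₀ c
  have hcξ : c ξ = 0 := by
    refine hc ξ fun hmem => hξ ?_
    exact ⟨⟨hmem.1, by simp [hξb, hξa]⟩, hmem.2⟩
  rw [piM_apply]
  simp only [Finsupp.sub_apply, Finsupp.smul_apply, smul_eq_mul, EE_apply,
    Finsupp.single_apply, if_neg (fun h : M.m σ₀ = ξ => hξa h.symm), mul_zero,
    sub_zero, hcξ, zero_sub, neg_eq_zero]
  by_cases hcb : c σ₀ = 0
  · rw [hcb, mul_zero, zero_mul]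
  by_cases hk : X.κ (M.m σ₀) ξ = 0
  · rw [hk, mul_zero]
  exfalso
  have hbT : σ₀ ∈ G ∩ {σ | X.dim σ = n} := by
    by_contra h; exact hcb (hc σ₀ h)
  have haG : M.m σ₀ ∈ G := hmG hbT.1
  have hξG : ξ ∈ G := hfaceG _ _ haG hk
  have hdξ : X.dim ξ = n := by
    have h1 := X.dim_rule _ _ hk
    have h2 := dim_m X M hσ₀
    have h3 : X.dim σ₀ = n := hbT.2
    omega
  exact hξ ⟨⟨hξG, by simp [hξb, hξa]⟩, hdξ⟩

lemma supp_iota [Nontrivial R] (hσ₀ : σ₀ ∈ M.A) (G : Set S) (n : ℕ)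
    (hfaceG : ∀ σ τ, σ ∈ G → X.κ σ τ ≠ 0 → τ ∈ G) (hmG : σ₀ ∈ G → M.m σ₀ ∈ G)
    (x : S →₀ R)
    (hx : x ∈ Finsupp.supported R R ((G \ {σ₀, M.m σ₀}) ∩ {σ | X.dim σ = n})) :
    iotaM X M σ₀ x ∈ Finsupp.supported R R (G ∩ {σ | X.dim σ = n}) := by
  rw [Finsupp.mem_supported'] at hx ⊢
  intro ξ hξ
  have hxξ : x ξ = 0 := hx ξ fun hmem => hξ ⟨hmem.1.1, hmem.2⟩
  rw [iotaM_apply]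
  simp only [Finsupp.sub_apply, Finsupp.smul_apply, smul_eq_mul, hxξ,
    Finsupp.single_apply, zero_sub, neg_eq_zero]
  by_cases hξa : M.m σ₀ = ξ
  swap
  · rw [if_neg hξa, mul_zero]
  rw [if_pos hξa, mul_one]
  by_cases hdb : (bdryL X.κ x) σ₀ = 0
  · rw [hdb, mul_zero]
  exfalso
  rw [bdryL_apply] at hdb
  obtain ⟨η, _, hη⟩ := Finset.exists_ne_zero_of_sum_ne_zero hdb
  have hxη : x η ≠ 0 := fun h => hη (by rw [h, zero_mul])
  have hκη : X.κ η σ₀ ≠ 0 := fun h => hη (by rw [h, mul_zero])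
  have hηT : η ∈ (G \ {σ₀, M.m σ₀}) ∩ {σ | X.dim σ = n} := by
    by_contra h; exact hxη (hx η h)
  have hbG : σ₀ ∈ G := hfaceG _ _ hηT.1.1 hκη
  have haG : M.m σ₀ ∈ G := hmG hbG
  have hda : X.dim (M.m σ₀) = n := by
    have h1 := X.dim_rule _ _ hκη
    have h2 := dim_m X M hσ₀
    have h3 : X.dim η = n := hηT.2
    omega
  exact hξ (hξa ▸ ⟨haG, hda⟩)

lemma pi_mem_cycles [Nontrivial R] (hσ₀ : σ₀ ∈ M.A) (G : Set S) (n : ℕ)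
    (hfaceG : ∀ σ τ, σ ∈ G → X.κ σ τ ≠ 0 → τ ∈ G) (hmG : σ₀ ∈ G → M.m σ₀ ∈ G)
    (c : S →₀ R) (hc : c ∈ cyclesIn X.κ (G ∩ {σ | X.dim σ = n})) :
    piM X M σ₀ c ∈
      cyclesIn (reducedKappaZ X M σ₀) ((G \ {σ₀, M.m σ₀}) ∩ {σ | X.dim σ = n}) := by
  obtain ⟨hc1, hc2⟩ := Submodule.mem_inf.mp hc
  refine Submodule.mem_inf.mpr ⟨supp_pi X M hσ₀ G n hfaceG hmG c hc1, ?_⟩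
  rw [LinearMap.mem_ker, pi_chain X M hσ₀ c, LinearMap.mem_ker.mp hc2, map_zero]

lemma iota_mem_cycles [Nontrivial R] (hσ₀ : σ₀ ∈ M.A) (G : Set S) (n : ℕ)
    (hfaceG : ∀ σ τ, σ ∈ G → X.κ σ τ ≠ 0 → τ ∈ G) (hmG : σ₀ ∈ G → M.m σ₀ ∈ G)
    (x : S →₀ R)
    (hx : x ∈ cyclesIn (reducedKappaZ X M σ₀)
      ((G \ {σ₀, M.m σ₀}) ∩ {σ | X.dim σ = n})) :
    iotaM X M σ₀ x ∈ cyclesIn X.κ (G ∩ {σ | X.dim σ = n}) := by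
  obtain ⟨hx1, hx2⟩ := Submodule.mem_inf.mp hx
  have hxb : x σ₀ = 0 := (Finsupp.mem_supported' R x).mp hx1 σ₀ (by simp)
  have hxa : x (M.m σ₀) = 0 := (Finsupp.mem_supported' R x).mp hx1 (M.m σ₀) (by simp)
  refine Submodule.mem_inf.mpr ⟨supp_iota X M hσ₀ G n hfaceG hmG x hx1, ?_⟩
  rw [LinearMap.mem_ker, iota_chain X M hσ₀ x hxb hxa, LinearMap.mem_ker.mp hx2,
    map_zero]

lemma pi_mem_bdries [Nontrivial R] (hσ₀ : σ₀ ∈ M.A) (G : Set S) (n : ℕ)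
    (hfaceG : ∀ σ τ, σ ∈ G → X.κ σ τ ≠ 0 → τ ∈ G) (hmG : σ₀ ∈ G → M.m σ₀ ∈ G)
    (y : S →₀ R) (hy : y ∈ bdriesIn X.κ (G ∩ {σ | X.dim σ = n})) :
    piM X M σ₀ y ∈
      bdriesIn (reducedKappaZ X M σ₀) ((G \ {σ₀, M.m σ₀}) ∩ {σ | X.dim σ = n}) := by
  obtain ⟨d, hd, rfl⟩ := hy
  exact ⟨piM X M σ₀ d, supp_pi X M hσ₀ G n hfaceG hmG d hd,
    pi_chain X M hσ₀ d⟩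

lemma iota_mem_bdries [Nontrivial R] (hσ₀ : σ₀ ∈ M.A) (G : Set S) (n : ℕ)
    (hfaceG : ∀ σ τ, σ ∈ G → X.κ σ τ ≠ 0 → τ ∈ G) (hmG : σ₀ ∈ G → M.m σ₀ ∈ G)
    (y : S →₀ R)
    (hy : y ∈ bdriesIn (reducedKappaZ X M σ₀)
      ((G \ {σ₀, M.m σ₀}) ∩ {σ | X.dim σ = n})) :
    iotaM X M σ₀ y ∈ bdriesIn X.κ (G ∩ {σ | X.dim σ = n}) := by
  obtain ⟨d, hd, rfl⟩ := hy
  have hdb : d σ₀ = 0 := (Finsupp.mem_supported' R d).mp hd σ₀ (by simp)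
  have hda : d (M.m σ₀) = 0 := (Finsupp.mem_supported' R d).mp hd (M.m σ₀) (by simp)
  exact ⟨iotaM X M σ₀ d, supp_iota X M hσ₀ G n hfaceG hmG d hd,
    iota_chain X M hσ₀ d hdb hda⟩

lemma homotopy_mem [Nontrivial R] (hσ₀ : σ₀ ∈ M.A) (G G' : Set S) (hGG' : G ⊆ G')
    (hmG' : σ₀ ∈ G' → M.m σ₀ ∈ G') (n : ℕ) (c : S →₀ R)
    (hc : c ∈ cyclesIn X.κ (G ∩ {σ | X.dim σ = n})) :
    c - iotaM X M σ₀ (piM X M σ₀ c) ∈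
      bdriesIn X.κ (G' ∩ {σ | X.dim σ = n + 1}) := by
  obtain ⟨hc1, hc2⟩ := Submodule.mem_inf.mp hc
  rw [iota_pi X M hσ₀ c (LinearMap.mem_ker.mp hc2)]
  refine ⟨Finsupp.single (M.m σ₀) (Ring.inverse (X.κ (M.m σ₀) σ₀) * c σ₀), ?_, rfl⟩
  by_cases hcb : c σ₀ = 0
  · rw [hcb, mul_zero, Finsupp.single_zero]
    exact Submodule.zero_mem _
  have hbT : σ₀ ∈ G ∩ {σ | X.dim σ = n} := by
    by_contra h; exact hcb ((Finsupp.mem_supported' R c).mp hc1 σ₀ h)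
  have haT : M.m σ₀ ∈ G' ∩ {σ | X.dim σ = n + 1} := by
    refine ⟨hmG' (hGG' hbT.1), ?_⟩
    have := dim_m X M hσ₀
    have := hbT.2
    simp only [Set.mem_setOf_eq] at *
    omega
  exact Finsupp.single_mem_supported R _ haT

end Aux4

/-- for a filtration-compatible acyclic matching and the reduction at a
matched pair `(m σ₀, σ₀)`, for every `α ⪯ β` and every `q`, the `q`-th persistent
homology of the filtered complex `S` is isomorphic to that of the reduced filtered
complex `S̄ = S \ {σ₀, m σ₀}` (with the induced filtration `S̄^α = S^α \ {σ₀, m σ₀}`). -/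
theorem stmt10 {R S : Type*} [CommRing R] [IsDomain R] [IsPrincipalIdealRing R]
    [Fintype S] [DecidableEq S] {k : ℕ} (X : SComplex R S) (M : PartialMatching X)
    (hac : M.Acyclic)
    (F : (Fin k → ℝ) → Set S)
    (hmono : ∀ α β : Fin k → ℝ, α ≤ β → F α ⊆ F β)
    (hface : ∀ (α : Fin k → ℝ) (σ τ : S), σ ∈ F α → X.κ σ τ ≠ 0 → τ ∈ F α)
    (hcompat : ∀ (α : Fin k → ℝ), ∀ σ ∈ M.A, σ ∈ F α → M.m σ ∈ F α)
    {σ₀ : S} (hσ₀ : σ₀ ∈ M.A) :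
    ∀ (α β : Fin k → ℝ), α ≤ β → ∀ q : ℕ,
      Nonempty
        (persHom X.κ (F α ∩ {σ | X.dim σ = q}) (F β ∩ {σ | X.dim σ = q + 1}) ≃ₗ[R]
          persHom (reducedKappaZ X M σ₀)
            ((F α \ {σ₀, M.m σ₀}) ∩ {σ | X.dim σ = q})
            ((F β \ {σ₀, M.m σ₀}) ∩ {σ | X.dim σ = q + 1})) := by
  intro α β hαβ q
  set κ' := reducedKappaZ X M σ₀ with hκ'
  set Tz := F α ∩ {σ | X.dim σ = q} with hTz
  set Tb := F β ∩ {σ | X.dim σ = q + 1} with hTb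
  set Tz' := (F α \ {σ₀, M.m σ₀}) ∩ {σ | X.dim σ = q} with hTz'
  set Tb' := (F β \ {σ₀, M.m σ₀}) ∩ {σ | X.dim σ = q + 1} with hTb'
  set Z := cyclesIn X.κ Tz with hZ
  set Bd := bdriesIn X.κ Tb with hBd
  set Z' := cyclesIn κ' Tz' with hZ'
  set Bd' := bdriesIn κ' Tb' with hBd'
  have hΦle : Bd ≤ Submodule.comap (piM X M σ₀) Bd' := fun y hy =>
    pi_mem_bdries X M hσ₀ (F β) (q + 1) (hface β) (hcompat β σ₀ hσ₀) y hy
  have hΨle : Bd' ≤ Submodule.comap (iotaM X M σ₀) Bd := fun y hy =>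
    iota_mem_bdries X M hσ₀ (F β) (q + 1) (hface β) (hcompat β σ₀ hσ₀) y hy
  set Φ := Submodule.mapQ Bd Bd' (piM X M σ₀) hΦle with hΦ
  set Ψ := Submodule.mapQ Bd' Bd (iotaM X M σ₀) hΨle with hΨ
  have hΦP : ∀ x ∈ Submodule.map Bd.mkQ Z, Φ x ∈ Submodule.map Bd'.mkQ Z' := by
    rintro x ⟨c, hc, rfl⟩
    refine ⟨piM X M σ₀ c,
      pi_mem_cycles X M hσ₀ (F α) q (hface α) (hcompat α σ₀ hσ₀) c hc, ?_⟩
    rw [Submodule.mkQ_apply, Submodule.mkQ_apply, hΦ, Submodule.mapQ_apply]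
  have hΨP : ∀ x ∈ Submodule.map Bd'.mkQ Z', Ψ x ∈ Submodule.map Bd.mkQ Z := by
    rintro x ⟨c, hc, rfl⟩
    refine ⟨iotaM X M σ₀ c,
      iota_mem_cycles X M hσ₀ (F α) q (hface α) (hcompat α σ₀ hσ₀) c hc, ?_⟩
    rw [Submodule.mkQ_apply, Submodule.mkQ_apply, hΨ, Submodule.mapQ_apply]
  refine ⟨LinearEquiv.ofLinear (Φ.restrict hΦP) (Ψ.restrict hΨP) ?_ ?_⟩
  · apply LinearMap.ext
    rintro ⟨x, hx⟩
    apply Subtype.ext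
    obtain ⟨c, hc, rfl⟩ := hx
    have hc1 := (Submodule.mem_inf.mp hc).1
    have hxb : c σ₀ = 0 := (Finsupp.mem_supported' R c).mp hc1 σ₀ (by simp [hTz'])
    have hxa : c (M.m σ₀) = 0 :=
      (Finsupp.mem_supported' R c).mp hc1 (M.m σ₀) (by simp [hTz'])
    show Φ (Ψ (Bd'.mkQ c)) = Bd'.mkQ c
    rw [Submodule.mkQ_apply, Submodule.mapQ_apply, Submodule.mapQ_apply,
      pi_iota X M hσ₀ c hxb hxa]
  · apply LinearMap.ext
    rintro ⟨x, hx⟩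
    apply Subtype.ext
    obtain ⟨c, hc, rfl⟩ := hx
    show Ψ (Φ (Bd.mkQ c)) = Bd.mkQ c
    rw [Submodule.mkQ_apply, Submodule.mapQ_apply, Submodule.mapQ_apply]
    rw [Submodule.Quotient.eq]
    have := homotopy_mem X M hσ₀ (F α) (F β) (hmono α β hαβ)
      (hcompat β σ₀ hσ₀) q c hc
    simpa using Submodule.neg_mem _ this
end

section
/- The sets A, B, C produced by the recursive matching algorithm (Algorithm 2) form a partition of the finite simplicial complex S, and the map m is a bijection from A to B. -/
open Classical in
/-- The lower link of a vertex `v` in the simplicial complex `K` with respect to the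
vertex map `f : V → ℝ^k`: the simplices `τ` with `v * τ ∈ K` and `f w ⪵ f v` for every
vertex `w` of `τ` (⪵ being the strict componentwise order). -/
noncomputable def lowerLink {V : Type*} [DecidableEq V] {k : ℕ}
    (K : Finset (Finset V)) (f : V → Fin k → ℝ) (v : V) : Finset (Finset V) :=
  K.filter fun τ => v ∉ τ ∧ insert v τ ∈ K ∧ ∀ w ∈ τ, f w ≤ f v ∧ f w ≠ f v

theorem lowerLink_card_lt {V : Type*} [DecidableEq V] {k : ℕ}
    (K : Finset (Finset V)) (f : V → Fin k → ℝ) (v : V)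
    (h : (lowerLink K f v).Nonempty) : (lowerLink K f v).card < K.card := by
  classical
  have hsub : lowerLink K f v ⊆ K := by
    simp [lowerLink]
  obtain ⟨τ, hτ⟩ := h
  have hmem : τ ∈ K ∧ v ∉ τ ∧ insert v τ ∈ K ∧ ∀ w ∈ τ, f w ≤ f v ∧ f w ≠ f v := by
    simpa [lowerLink] using hτ
  apply Finset.card_lt_card
  rw [Finset.ssubset_iff_of_subset hsub]
  refine ⟨insert v τ, hmem.2.2.1, fun hc => ?_⟩
  have hvc : v ∉ insert v τ := by
    simp only [lowerLink, Finset.mem_filter] at hc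
    exact hc.2.1
  exact hvc (Finset.mem_insert_self v τ)

/-- The output of the matching algorithm (Algorithm 2): the lists `A`, `B` of matched
simplices and the matching map `m : A → B`. -/
structure MatchOut (V : Type*) [DecidableEq V] where
  A : Finset (Finset V)
  B : Finset (Finset V)
  m : Finset V → Finset V

open Classical in
/-- Algorithm 2 (the recursive lower-link matching algorithm). For every vertex `v` of
`K` whose lower link is nonempty: recursively partition the lower link, pick the
vertex `w₀` of the critical part of the lower link with `f`-value minimal w.r.t. ⪵
and smallest index `I`, match `v` with the edge `{v, w₀}`, and match `v * σ` with
`v * m' σ` for every `σ` matched in the lower link. All other simplices are critical,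
i.e. the critical set is `C = K \ (A ∪ B)`. -/
noncomputable def algMatch {V : Type*} [DecidableEq V] [Fintype V] {k : ℕ}
    (f : V → Fin k → ℝ) (I : V → ℕ) (K : Finset (Finset V)) : MatchOut V :=
  let sub : V → MatchOut V := fun v =>
    if h : (lowerLink K f v).Nonempty then algMatch f I (lowerLink K f v)
    else ⟨∅, ∅, fun _ => ∅⟩
  let w0 : V → V := fun v =>
    let o := sub v
    let C' := lowerLink K f v \ (o.A ∪ o.B)
    let C0 : Finset V := Finset.univ.filter fun w => ({w} : Finset V) ∈ C'
    let D' := C0.filter fun w => ∀ u ∈ C0, ¬(f u ≤ f w ∧ f u ≠ f w)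
    if hD : D'.Nonempty then (Finset.exists_min_image D' I hD).choose else v
  let Av : Finset V := Finset.univ.filter fun v =>
    ({v} : Finset V) ∈ K ∧ (lowerLink K f v).Nonempty
  ⟨Av.image (fun v => ({v} : Finset V)) ∪
      Av.biUnion (fun v => ((sub v).A).image fun σ => insert v σ),
    Av.image (fun v => ({v, w0 v} : Finset V)) ∪
      Av.biUnion (fun v => ((sub v).A).image fun σ => insert v ((sub v).m σ)),
    fun τ =>
      if hτ : τ.Nonempty then
        let v := (Finset.exists_max_image τ I hτ).choose
        if τ = {v} then {v, w0 v}
        else insert v ((sub v).m (τ.erase v))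
      else ∅⟩
termination_by K.card
decreasing_by exact lowerLink_card_lt K f _ h


open Classical in
noncomputable def mysub {V : Type*} [DecidableEq V] [Fintype V] {k : ℕ}
    (f : V → Fin k → ℝ) (I : V → ℕ) (K : Finset (Finset V)) (v : V) : MatchOut V :=
  if h : (lowerLink K f v).Nonempty then algMatch f I (lowerLink K f v)
  else ⟨∅, ∅, fun _ => ∅⟩

open Classical in
noncomputable def myC0 {V : Type*} [DecidableEq V] [Fintype V] {k : ℕ}
    (f : V → Fin k → ℝ) (I : V → ℕ) (K : Finset (Finset V)) (v : V) : Finset V :=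
  Finset.univ.filter fun w =>
    ({w} : Finset V) ∈ lowerLink K f v \ ((mysub f I K v).A ∪ (mysub f I K v).B)

open Classical in
noncomputable def myD {V : Type*} [DecidableEq V] [Fintype V] {k : ℕ}
    (f : V → Fin k → ℝ) (I : V → ℕ) (K : Finset (Finset V)) (v : V) : Finset V :=
  (myC0 f I K v).filter fun w => ∀ u ∈ myC0 f I K v, ¬(f u ≤ f w ∧ f u ≠ f w)

open Classical in
noncomputable def myw0 {V : Type*} [DecidableEq V] [Fintype V] {k : ℕ}
    (f : V → Fin k → ℝ) (I : V → ℕ) (K : Finset (Finset V)) (v : V) : V :=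
  if hD : (myD f I K v).Nonempty then (Finset.exists_min_image (myD f I K v) I hD).choose
  else v

open Classical in
noncomputable def myAv {V : Type*} [DecidableEq V] [Fintype V] {k : ℕ}
    (f : V → Fin k → ℝ) (K : Finset (Finset V)) : Finset V :=
  Finset.univ.filter fun v => ({v} : Finset V) ∈ K ∧ (lowerLink K f v).Nonempty

open Classical in
theorem algMatch_eq {V : Type*} [DecidableEq V] [Fintype V] {k : ℕ}
    (f : V → Fin k → ℝ) (I : V → ℕ) (K : Finset (Finset V)) :
    algMatch f I K =
      ⟨(myAv f K).image (fun v => ({v} : Finset V)) ∪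
          (myAv f K).biUnion (fun v => ((mysub f I K v).A).image fun σ => insert v σ),
        (myAv f K).image (fun v => ({v, myw0 f I K v} : Finset V)) ∪
          (myAv f K).biUnion
            (fun v => ((mysub f I K v).A).image fun σ => insert v ((mysub f I K v).m σ)),
        fun τ =>
          if hτ : τ.Nonempty then
            let v := (Finset.exists_max_image τ I hτ).choose
            if τ = {v} then {v, myw0 f I K v}
            else insert v ((mysub f I K v).m (τ.erase v))
          else ∅⟩ := by
  rw [algMatch]
  rfl

section Helpers
variable {V : Type*} [DecidableEq V] [Fintype V] {k : ℕ}
  {f : V → Fin k → ℝ} {I : V → ℕ}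

lemma mem_lowerLink {K : Finset (Finset V)} {v : V} {τ : Finset V} :
    τ ∈ lowerLink K f v ↔
      τ ∈ K ∧ v ∉ τ ∧ insert v τ ∈ K ∧ ∀ w ∈ τ, f w ≤ f v ∧ f w ≠ f v := by
  simp [lowerLink]

lemma lowerLink_subset {K : Finset (Finset V)} {v : V} :
    lowerLink K f v ⊆ K := fun _ h => (mem_lowerLink.mp h).1

lemma lowerLink_down {K : Finset (Finset V)}
    (hdown : ∀ σ ∈ K, ∀ τ, τ ⊆ σ → τ.Nonempty → τ ∈ K) (v : V) :
    ∀ σ ∈ lowerLink K f v, ∀ τ, τ ⊆ σ → τ.Nonempty → τ ∈ lowerLink K f v := by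
  intro σ hσ τ hsub hne
  rw [mem_lowerLink] at hσ ⊢
  obtain ⟨h1, h2, h3, h4⟩ := hσ
  refine ⟨hdown σ h1 τ hsub hne, fun hc => h2 (hsub hc), ?_, fun w hw => h4 w (hsub hw)⟩
  exact hdown _ h3 _ (Finset.insert_subset_insert v hsub) (Finset.insert_nonempty _ _)

lemma max_choose_eq (hI : Function.Injective I) {τ : Finset V} (hτ : τ.Nonempty)
    {v : V} (hv : v ∈ τ) (h : ∀ w ∈ τ, I w ≤ I v) :
    (Finset.exists_max_image τ I hτ).choose = v := by
  obtain ⟨h1, h2⟩ := (Finset.exists_max_image τ I hτ).choose_spec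
  exact hI (le_antisymm (h _ h1) (h2 v hv))

lemma insert_inj {v v' : V} {ρ ρ' : Finset V}
    (hv : v ∉ ρ) (hv' : v' ∉ ρ')
    (h1 : ∀ w ∈ ρ, I w < I v) (h2 : ∀ w ∈ ρ', I w < I v')
    (he : insert v ρ = insert v' ρ') : v = v' ∧ ρ = ρ' := by
  have hvv : v = v' := by
    by_contra hne
    have hv1 : v ∈ insert v' ρ' := he ▸ Finset.mem_insert_self v ρ
    have hv2 : v' ∈ insert v ρ := he ▸ Finset.mem_insert_self v' ρ'
    rcases Finset.mem_insert.mp hv1 with h | h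
    · exact hne h
    rcases Finset.mem_insert.mp hv2 with h' | h'
    · exact hne h'.symm
    exact absurd (h2 v h) (not_lt.mpr (h1 v' h').le)
  subst hvv
  exact ⟨rfl, by rw [← Finset.erase_insert hv, he, Finset.erase_insert hv']⟩

lemma m_singleton (hI : Function.Injective I) (K : Finset (Finset V)) (v : V) :
    (algMatch f I K).m {v} = {v, myw0 f I K v} := by
  rw [algMatch_eq]
  dsimp only
  have hne : ({v} : Finset V).Nonempty := Finset.singleton_nonempty v
  rw [dif_pos hne]
  have hc : (Finset.exists_max_image {v} I hne).choose = v :=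
    max_choose_eq hI hne (Finset.mem_singleton_self v)
      (fun w hw => by rw [Finset.mem_singleton.mp hw])
  rw [hc, if_pos rfl]

lemma m_insert (hI : Function.Injective I) (K : Finset (Finset V)) {v : V} {σ : Finset V}
    (hσ : σ.Nonempty) (hv : v ∉ σ) (hlt : ∀ w ∈ σ, I w < I v) :
    (algMatch f I K).m (insert v σ) = insert v ((mysub f I K v).m σ) := by
  rw [algMatch_eq]
  dsimp only
  have hne : (insert v σ).Nonempty := Finset.insert_nonempty _ _
  rw [dif_pos hne]
  have hc : (Finset.exists_max_image (insert v σ) I hne).choose = v := by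
    refine max_choose_eq hI hne (Finset.mem_insert_self v σ) (fun w hw => ?_)
    rcases Finset.mem_insert.mp hw with h | h
    · rw [h]
    · exact (hlt w h).le
  rw [hc]
  have hns : insert v σ ≠ {v} := by
    intro h
    obtain ⟨w, hw⟩ := hσ
    have : w ∈ insert v σ := Finset.mem_insert_of_mem hw
    rw [h, Finset.mem_singleton] at this
    exact hv (this ▸ hw)
  rw [if_neg hns, Finset.erase_insert hv]

end Helpers

lemma master {V : Type*} [DecidableEq V] [Fintype V] {k : ℕ}
    (f : V → Fin k → ℝ) (I : V → ℕ) (hI : Function.Injective I)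
    (hcomp : ∀ v w : V, f v ≤ f w → f v ≠ f w → I v < I w) :
    ∀ (n : ℕ) (K : Finset (Finset V)), K.card ≤ n →
      (∀ σ ∈ K, σ.Nonempty) →
      (∀ σ ∈ K, ∀ τ, τ ⊆ σ → τ.Nonempty → τ ∈ K) →
      (algMatch f I K).A ⊆ K ∧ (algMatch f I K).B ⊆ K ∧
      Disjoint (algMatch f I K).A (algMatch f I K).B ∧
      Set.BijOn (algMatch f I K).m ↑(algMatch f I K).A ↑(algMatch f I K).B ∧
      (∀ w : V, ({w} : Finset V) ∉ (algMatch f I K).B) ∧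
      (∀ w : V, ({w} : Finset V) ∈ (algMatch f I K).A → (lowerLink K f w).Nonempty) := by
  intro n
  induction n with
  | zero =>
      intro K hcard hne hdown
      have hK : K = ∅ := Finset.card_eq_zero.mp (Nat.le_zero.mp hcard)
      subst hK
      have hAv : myAv f (∅ : Finset (Finset V)) = ∅ := by
        ext v; simp [myAv]
      rw [algMatch_eq]
      simp only [hAv, Finset.image_empty, Finset.biUnion_empty, Finset.empty_union,
        Finset.coe_empty]
      refine ⟨Finset.Subset.refl _, Finset.Subset.refl _, Finset.disjoint_empty_left _,
        ⟨fun x hx => hx.elim, fun x hx => hx.elim, fun x hx => hx.elim⟩,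
        fun w hw => by simp at hw, fun w hw => by simp at hw⟩
  | succ n ih =>
      intro K hcard hne hdown
      classical
      have hAv : ∀ v ∈ myAv f K, ({v} : Finset V) ∈ K ∧ (lowerLink K f v).Nonempty := by
        intro v hv; simpa [myAv] using hv
      have hsubv : ∀ v ∈ myAv f K, mysub f I K v = algMatch f I (lowerLink K f v) :=
        fun v hv => dif_pos (hAv v hv).2
      have G : ∀ v ∈ myAv f K,
          (mysub f I K v).A ⊆ lowerLink K f v ∧
          (mysub f I K v).B ⊆ lowerLink K f v ∧
          Disjoint (mysub f I K v).A (mysub f I K v).B ∧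
          Set.BijOn (mysub f I K v).m ↑(mysub f I K v).A ↑(mysub f I K v).B ∧
          (∀ w : V, ({w} : Finset V) ∉ (mysub f I K v).B) ∧
          (∀ w : V, ({w} : Finset V) ∈ (mysub f I K v).A →
            (lowerLink (lowerLink K f v) f w).Nonempty) := by
        intro v hv
        rw [hsubv v hv]
        exact ih (lowerLink K f v)
          (Nat.lt_succ_iff.mp (lt_of_lt_of_le (lowerLink_card_lt K f v (hAv v hv).2) hcard))
          (fun σ hσ => hne σ (lowerLink_subset hσ))
          (lowerLink_down hdown v)
      have hIlt : ∀ (v : V), ∀ σ ∈ lowerLink K f v, ∀ w ∈ σ, I w < I v := by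
        intro v σ hσ w hw
        have h := (mem_lowerLink.mp hσ).2.2.2 w hw
        exact hcomp w v h.1 h.2
      have hvnot : ∀ (v : V), ∀ σ ∈ lowerLink K f v, v ∉ σ :=
        fun v σ hσ => (mem_lowerLink.mp hσ).2.1
      have hinsK : ∀ (v : V), ∀ σ ∈ lowerLink K f v, insert v σ ∈ K :=
        fun v σ hσ => (mem_lowerLink.mp hσ).2.2.1
      -- w₀ facts
      have hw0 : ∀ v ∈ myAv f K, ({myw0 f I K v} : Finset V) ∈ lowerLink K f v ∧
          {myw0 f I K v} ∉ (mysub f I K v).A ∧ {myw0 f I K v} ∉ (mysub f I K v).B := by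
        intro v hv
        have hC0ne : (myC0 f I K v).Nonempty := by
          have hS : (Finset.univ.filter fun w =>
              ({w} : Finset V) ∈ lowerLink K f v).Nonempty := by
            obtain ⟨σ, hσ⟩ := (hAv v hv).2
            obtain ⟨u, hu⟩ := hne σ (lowerLink_subset hσ)
            refine ⟨u, Finset.mem_filter.mpr ⟨Finset.mem_univ u, ?_⟩⟩
            exact lowerLink_down hdown v σ hσ {u}
              (Finset.singleton_subset_iff.mpr hu) (Finset.singleton_nonempty u)
          obtain ⟨u0, hu0S, hu0min⟩ := Finset.exists_min_image _ I hS
          have hu0L : ({u0} : Finset V) ∈ lowerLink K f v := (Finset.mem_filter.mp hu0S).2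
          refine ⟨u0, ?_⟩
          have hnotA : ({u0} : Finset V) ∉ (mysub f I K v).A := by
            intro hA
            obtain ⟨τ, hτ⟩ := (G v hv).2.2.2.2.2 u0 hA
            have hτL : τ ∈ lowerLink K f v := lowerLink_subset hτ
            obtain ⟨w, hw⟩ := hne τ (lowerLink_subset hτL)
            have hwf := (mem_lowerLink.mp hτ).2.2.2 w hw
            have hwlt : I w < I u0 := hcomp w u0 hwf.1 hwf.2
            have hwS : w ∈ Finset.univ.filter fun w =>
                ({w} : Finset V) ∈ lowerLink K f v := by
              refine Finset.mem_filter.mpr ⟨Finset.mem_univ w, ?_⟩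
              exact lowerLink_down hdown v τ hτL {w}
                (Finset.singleton_subset_iff.mpr hw) (Finset.singleton_nonempty w)
            exact absurd (hu0min w hwS) (not_le.mpr hwlt)
          have hnotB := (G v hv).2.2.2.2.1 u0
          simp only [myC0, Finset.mem_filter, Finset.mem_univ, true_and,
            Finset.mem_sdiff, Finset.mem_union]
          exact ⟨hu0L, fun h => h.elim hnotA hnotB⟩
        obtain ⟨u1, hu1C, hu1min⟩ := Finset.exists_min_image (myC0 f I K v) I hC0ne
        have hD : (myD f I K v).Nonempty := by
          refine ⟨u1, Finset.mem_filter.mpr ⟨hu1C, fun u huC hcon => ?_⟩⟩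
          exact absurd (hu1min u huC) (not_le.mpr (hcomp u u1 hcon.1 hcon.2))
        have hw0D : myw0 f I K v ∈ myD f I K v := by
          rw [myw0, dif_pos hD]
          exact (Finset.exists_min_image _ I hD).choose_spec.1
        have hw0C : myw0 f I K v ∈ myC0 f I K v := (Finset.mem_filter.mp hw0D).1
        have hmem := (Finset.mem_filter.mp hw0C).2
        rw [Finset.mem_sdiff, Finset.mem_union] at hmem
        exact ⟨hmem.1, fun h => hmem.2 (Or.inl h), fun h => hmem.2 (Or.inr h)⟩
      have hw0lt : ∀ v ∈ myAv f K, I (myw0 f I K v) < I v := fun v hv =>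
        hIlt v {myw0 f I K v} (hw0 v hv).1 _ (Finset.mem_singleton_self _)
      have hw0ne : ∀ v ∈ myAv f K, v ∉ ({myw0 f I K v} : Finset V) := by
        intro v hv hc
        rw [Finset.mem_singleton] at hc
        exact absurd (hw0lt v hv) (by rw [← hc]; exact lt_irrefl _)
      have hw0lt' : ∀ v ∈ myAv f K, ∀ w ∈ ({myw0 f I K v} : Finset V), I w < I v := by
        intro v hv w hw
        rw [Finset.mem_singleton.mp hw]
        exact hw0lt v hv
      have hA'facts : ∀ v ∈ myAv f K, ∀ σ ∈ (mysub f I K v).A,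
          σ.Nonempty ∧ v ∉ σ ∧ (∀ w ∈ σ, I w < I v) ∧ insert v σ ∈ K := by
        intro v hv σ hσ
        have hL : σ ∈ lowerLink K f v := (G v hv).1 hσ
        exact ⟨hne σ (lowerLink_subset hL), hvnot v σ hL, hIlt v σ hL, hinsK v σ hL⟩
      have hm'B : ∀ v ∈ myAv f K, ∀ σ ∈ (mysub f I K v).A,
          (mysub f I K v).m σ ∈ (mysub f I K v).B := by
        intro v hv σ hσ
        exact_mod_cast (G v hv).2.2.2.1.1 (Finset.mem_coe.mpr hσ)
      have hB'facts : ∀ v ∈ myAv f K, ∀ b ∈ (mysub f I K v).B,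
          b.Nonempty ∧ v ∉ b ∧ (∀ w ∈ b, I w < I v) ∧ insert v b ∈ K := by
        intro v hv b hb
        have hL : b ∈ lowerLink K f v := (G v hv).2.1 hb
        exact ⟨hne b (lowerLink_subset hL), hvnot v b hL, hIlt v b hL, hinsK v b hL⟩
      -- membership characterizations
      have hAmem : ∀ τ : Finset V, τ ∈ (algMatch f I K).A ↔
          (∃ v ∈ myAv f K, τ = {v}) ∨
            ∃ v ∈ myAv f K, ∃ σ ∈ (mysub f I K v).A, τ = insert v σ := by
        intro τ
        rw [algMatch_eq]
        simp only [Finset.mem_union, Finset.mem_image, Finset.mem_biUnion]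
        constructor
        · rintro (⟨v, hv, rfl⟩ | ⟨v, hv, σ, hσ, rfl⟩)
          · exact Or.inl ⟨v, hv, rfl⟩
          · exact Or.inr ⟨v, hv, σ, hσ, rfl⟩
        · rintro (⟨v, hv, rfl⟩ | ⟨v, hv, σ, hσ, rfl⟩)
          · exact Or.inl ⟨v, hv, rfl⟩
          · exact Or.inr ⟨v, hv, σ, hσ, rfl⟩
      have hBmem : ∀ τ : Finset V, τ ∈ (algMatch f I K).B ↔
          (∃ v ∈ myAv f K, τ = {v, myw0 f I K v}) ∨
            ∃ v ∈ myAv f K, ∃ σ ∈ (mysub f I K v).A,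
              τ = insert v ((mysub f I K v).m σ) := by
        intro τ
        rw [algMatch_eq]
        simp only [Finset.mem_union, Finset.mem_image, Finset.mem_biUnion]
        constructor
        · rintro (⟨v, hv, rfl⟩ | ⟨v, hv, σ, hσ, rfl⟩)
          · exact Or.inl ⟨v, hv, rfl⟩
          · exact Or.inr ⟨v, hv, σ, hσ, rfl⟩
        · rintro (⟨v, hv, rfl⟩ | ⟨v, hv, σ, hσ, rfl⟩)
          · exact Or.inl ⟨v, hv, rfl⟩
          · exact Or.inr ⟨v, hv, σ, hσ, rfl⟩
      have hsing : ∀ v : V, ({v} : Finset V) = insert v ∅ := fun v => rfl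
      have hpair : ∀ v w : V, ({v, w} : Finset V) = insert v {w} := fun v w => rfl
      -- A ⊆ K
      have hAK : (algMatch f I K).A ⊆ K := by
        intro τ hτ
        rw [hAmem] at hτ
        rcases hτ with ⟨v, hv, rfl⟩ | ⟨v, hv, σ, hσ, rfl⟩
        · exact (hAv v hv).1
        · exact (hA'facts v hv σ hσ).2.2.2
      -- B ⊆ K
      have hBK : (algMatch f I K).B ⊆ K := by
        intro τ hτ
        rw [hBmem] at hτ
        rcases hτ with ⟨v, hv, rfl⟩ | ⟨v, hv, σ, hσ, rfl⟩
        · rw [hpair]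
          exact hinsK v _ (hw0 v hv).1
        · exact (hB'facts v hv _ (hm'B v hv σ hσ)).2.2.2
      -- Disjoint A B
      have hdisj : Disjoint (algMatch f I K).A (algMatch f I K).B := by
        rw [Finset.disjoint_left]
        intro τ hA hB
        rw [hAmem] at hA
        rw [hBmem] at hB
        rcases hA with ⟨v, hv, rfl⟩ | ⟨v, hv, σ, hσ, rfl⟩ <;>
          rcases hB with ⟨v', hv', he⟩ | ⟨v', hv', σ', hσ', he⟩
        · rw [hsing, hpair] at he
          obtain ⟨_, hρ⟩ := insert_inj (Finset.notMem_empty v) (hw0ne v' hv')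
            (fun w hw => absurd hw (Finset.notMem_empty w)) (hw0lt' v' hv') he
          exact Finset.singleton_ne_empty _ hρ.symm
        · rw [hsing] at he
          have hb := hB'facts v' hv' _ (hm'B v' hv' σ' hσ')
          obtain ⟨_, hρ⟩ := insert_inj (Finset.notMem_empty v) hb.2.1
            (fun w hw => absurd hw (Finset.notMem_empty w)) hb.2.2.1 he
          exact absurd hρ.symm (Finset.nonempty_iff_ne_empty.mp hb.1)
        · rw [hpair] at he
          have ha := hA'facts v hv σ hσ
          obtain ⟨hvv, hρ⟩ := insert_inj ha.2.1 (hw0ne v' hv')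
            ha.2.2.1 (hw0lt' v' hv') he
          subst hvv
          rw [hρ] at hσ
          exact (hw0 v hv).2.1 hσ
        · have ha := hA'facts v hv σ hσ
          have hb := hB'facts v' hv' _ (hm'B v' hv' σ' hσ')
          obtain ⟨hvv, hρ⟩ := insert_inj ha.2.1 hb.2.1 ha.2.2.1 hb.2.2.1 he
          subst hvv
          rw [hρ] at hσ
          exact (Finset.disjoint_left.mp (G v hv).2.2.1) hσ (hm'B v hv σ' hσ')
      -- no singleton in B
      have hnoSingB : ∀ w : V, ({w} : Finset V) ∉ (algMatch f I K).B := by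
        intro w hw
        rw [hBmem] at hw
        rcases hw with ⟨v, hv, he⟩ | ⟨v, hv, σ, hσ, he⟩
        · rw [hsing, hpair] at he
          obtain ⟨_, hρ⟩ := insert_inj (Finset.notMem_empty w) (hw0ne v hv)
            (fun u hu => absurd hu (Finset.notMem_empty u)) (hw0lt' v hv) he
          exact Finset.singleton_ne_empty _ hρ.symm
        · rw [hsing] at he
          have hb := hB'facts v hv _ (hm'B v hv σ hσ)
          obtain ⟨_, hρ⟩ := insert_inj (Finset.notMem_empty w) hb.2.1
            (fun u hu => absurd hu (Finset.notMem_empty u)) hb.2.2.1 he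
          exact absurd hρ.symm (Finset.nonempty_iff_ne_empty.mp hb.1)
      -- singleton in A → nonempty lower link
      have hsingA : ∀ w : V, ({w} : Finset V) ∈ (algMatch f I K).A →
          (lowerLink K f w).Nonempty := by
        intro w hw
        rw [hAmem] at hw
        rcases hw with ⟨v, hv, he⟩ | ⟨v, hv, σ, hσ, he⟩
        · rw [Finset.singleton_inj.mp he]
          exact (hAv v hv).2
        · rw [hsing] at he
          have ha := hA'facts v hv σ hσ
          obtain ⟨_, hρ⟩ := insert_inj (Finset.notMem_empty w) ha.2.1
            (fun u hu => absurd hu (Finset.notMem_empty u)) ha.2.2.1 he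
          exact absurd hρ.symm (Finset.nonempty_iff_ne_empty.mp ha.1)
      -- BijOn
      have hbij : Set.BijOn (algMatch f I K).m
          ↑(algMatch f I K).A ↑(algMatch f I K).B := by
        refine ⟨?_, ?_, ?_⟩
        · -- MapsTo
          intro τ hτ
          rw [Finset.mem_coe, hAmem] at hτ
          rw [Finset.mem_coe, hBmem]
          rcases hτ with ⟨v, hv, rfl⟩ | ⟨v, hv, σ, hσ, rfl⟩
          · rw [m_singleton hI K v]
            exact Or.inl ⟨v, hv, rfl⟩
          · have ha := hA'facts v hv σ hσ
            rw [m_insert hI K ha.1 ha.2.1 ha.2.2.1]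
            exact Or.inr ⟨v, hv, σ, hσ, rfl⟩
        · -- InjOn
          intro τ1 h1 τ2 h2 he
          rw [Finset.mem_coe, hAmem] at h1 h2
          rcases h1 with ⟨v, hv, rfl⟩ | ⟨v, hv, σ, hσ, rfl⟩ <;>
            rcases h2 with ⟨v', hv', rfl⟩ | ⟨v', hv', σ', hσ', rfl⟩
          · rw [m_singleton hI K v, m_singleton hI K v'] at he
            rw [hpair, hpair] at he
            obtain ⟨hvv, _⟩ := insert_inj (hw0ne v hv) (hw0ne v' hv')
              (hw0lt' v hv) (hw0lt' v' hv') he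
            rw [hvv]
          · have ha := hA'facts v' hv' σ' hσ'
            rw [m_singleton hI K v, m_insert hI K ha.1 ha.2.1 ha.2.2.1] at he
            rw [hpair] at he
            have hb := hB'facts v' hv' _ (hm'B v' hv' σ' hσ')
            obtain ⟨hvv, hρ⟩ := insert_inj (hw0ne v hv) hb.2.1
              (hw0lt' v hv) hb.2.2.1 he
            subst hvv
            exact absurd (hρ ▸ hm'B v hv' σ' hσ') (hw0 v hv).2.2
          · have ha := hA'facts v hv σ hσ
            rw [m_singleton hI K v', m_insert hI K ha.1 ha.2.1 ha.2.2.1] at he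
            rw [hpair] at he
            have hb := hB'facts v hv _ (hm'B v hv σ hσ)
            obtain ⟨hvv, hρ⟩ := insert_inj hb.2.1 (hw0ne v' hv')
              hb.2.2.1 (hw0lt' v' hv') he
            subst hvv
            exact absurd (hρ.symm ▸ hm'B v hv σ hσ) (hw0 v hv').2.2
          · have ha := hA'facts v hv σ hσ
            have ha' := hA'facts v' hv' σ' hσ'
            rw [m_insert hI K ha.1 ha.2.1 ha.2.2.1,
              m_insert hI K ha'.1 ha'.2.1 ha'.2.2.1] at he
            have hb := hB'facts v hv _ (hm'B v hv σ hσ)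
            have hb' := hB'facts v' hv' _ (hm'B v' hv' σ' hσ')
            obtain ⟨hvv, hρ⟩ := insert_inj hb.2.1 hb'.2.1 hb.2.2.1 hb'.2.2.1 he
            subst hvv
            have hσσ : σ = σ' := (G v hv).2.2.2.1.2.1
              (Finset.mem_coe.mpr hσ) (Finset.mem_coe.mpr hσ') hρ
            rw [hσσ]
        · -- SurjOn
          intro b hb
          rw [Finset.mem_coe, hBmem] at hb
          rcases hb with ⟨v, hv, rfl⟩ | ⟨v, hv, σ, hσ, rfl⟩
          · exact ⟨{v}, Finset.mem_coe.mpr ((hAmem _).mpr (Or.inl ⟨v, hv, rfl⟩)),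
              m_singleton hI K v⟩
          · have ha := hA'facts v hv σ hσ
            exact ⟨insert v σ,
              Finset.mem_coe.mpr ((hAmem _).mpr (Or.inr ⟨v, hv, σ, hσ, rfl⟩)),
              m_insert hI K ha.1 ha.2.1 ha.2.2.1⟩
      exact ⟨hAK, hBK, hdisj, hbij, hnoSingB, hsingA⟩
/-- the sets A, B produced by the matching algorithm (Algorithm 2),
together with the set C of remaining simplices, form a partition of the simplicial
complex K, and m is a bijection from A onto B. -/
theorem stmt13 {V : Type*} [DecidableEq V] [Fintype V] {k : ℕ}
    (K : Finset (Finset V))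
    (hne : ∀ σ ∈ K, σ.Nonempty)
    (hdown : ∀ σ ∈ K, ∀ τ, τ ⊆ σ → τ.Nonempty → τ ∈ K)
    (f : V → Fin k → ℝ) (I : V → ℕ) (hI : Function.Injective I)
    (hcomp : ∀ v w : V, f v ≤ f w → f v ≠ f w → I v < I w) :
    (algMatch f I K).A ⊆ K ∧ (algMatch f I K).B ⊆ K ∧
    Disjoint (algMatch f I K).A (algMatch f I K).B ∧
    (algMatch f I K).A ∪ (algMatch f I K).B ∪
        (K \ ((algMatch f I K).A ∪ (algMatch f I K).B)) = K ∧
    Set.BijOn (algMatch f I K).m ↑(algMatch f I K).A ↑(algMatch f I K).B := by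
  obtain ⟨hA, hB, hdisj, hbij, _, _⟩ := master f I hI hcomp K.card K le_rfl hne hdown
  exact ⟨hA, hB, hdisj,
    Finset.union_sdiff_of_subset (Finset.union_subset hA hB), hbij⟩
end

section
/- For the matching m produced by Algorithm 2 with indexing I compatible with f (f(v) ⪵ f(w) ⟹ I(v) < I(w)): for every σ ∈ A, maxI(σ) = maxI(m(σ)). -/
open Classical in
private lemma algMatch_A_subset {V : Type*} [DecidableEq V] [Fintype V] {k : ℕ}
    (f : V → Fin k → ℝ) (I : V → ℕ) :
    ∀ n (K : Finset (Finset V)), K.card < n → (algMatch f I K).A ⊆ K := by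
  intro n
  induction n with
  | zero => intro K h; omega
  | succ n ih =>
    intro K hK σ hσ
    rw [algMatch] at hσ
    simp only [Finset.mem_union, Finset.mem_image, Finset.mem_biUnion, Finset.mem_filter,
      Finset.mem_univ, true_and] at hσ
    rcases hσ with ⟨v, ⟨hvK, _⟩, rfl⟩ | ⟨v, ⟨hvK, hl⟩, σ', hσ', rfl⟩
    · exact hvK
    · rw [dif_pos hl] at hσ'
      have hL : (lowerLink K f v).card < n :=
        lt_of_lt_of_le (lowerLink_card_lt K f v hl) (Nat.lt_succ_iff.mp hK)
      have hmem : σ' ∈ lowerLink K f v := ih (lowerLink K f v) hL hσ'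
      simp only [lowerLink, Finset.mem_filter] at hmem
      exact hmem.2.2.1

open Classical in
private lemma algMatch_m_singleton_sup {V : Type*} [DecidableEq V] [Fintype V] {k : ℕ}
    (f : V → Fin k → ℝ) (I : V → ℕ) (K : Finset (Finset V)) (v : V)
    (hcomp : ∀ v w : V, f v ≤ f w → f v ≠ f w → I v < I w) :
    (((algMatch f I K).m {v}).sup I) = I v := by
  have key : ∀ w : V, ({w} : Finset V) ∈ lowerLink K f v → I w < I v := by
    intro w hw
    simp only [lowerLink, Finset.mem_filter] at hw
    have := hw.2.2.2 w (Finset.mem_singleton_self w)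
    exact hcomp w v this.1 this.2
  rw [algMatch]
  simp only []
  have hτ : ({v} : Finset V).Nonempty := Finset.singleton_nonempty v
  rw [dif_pos hτ]
  have hc : (Finset.exists_max_image ({v}:Finset V) I hτ).choose = v := by
    have h := (Finset.exists_max_image ({v}:Finset V) I hτ).choose_spec
    exact Finset.mem_singleton.mp h.1
  rw [hc, if_pos rfl, Finset.sup_insert, Finset.sup_singleton]
  by_cases hl : (lowerLink K f v).Nonempty
  · simp only [dif_pos hl]
    split_ifs with hD
    · obtain ⟨h1, -⟩ := (Finset.exists_min_image _ I hD).choose_spec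
      have h2 := (Finset.mem_filter.mp h1).1
      have h3 := (Finset.mem_filter.mp h2).2
      have h4 := (Finset.mem_sdiff.mp h3).1
      have := key _ h4
      omega
    · simp
  · simp only [dif_neg hl]
    split_ifs with hD
    · obtain ⟨h1, -⟩ := (Finset.exists_min_image _ I hD).choose_spec
      have h2 := (Finset.mem_filter.mp h1).1
      have h3 := (Finset.mem_filter.mp h2).2
      have h4 := (Finset.mem_sdiff.mp h3).1
      have := key _ h4
      omega
    · simp

open Classical in
private lemma algMatch_main {V : Type*} [DecidableEq V] [Fintype V] {k : ℕ}
    (f : V → Fin k → ℝ) (I : V → ℕ)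
    (hcomp : ∀ v w : V, f v ≤ f w → f v ≠ f w → I v < I w) :
    ∀ n (K : Finset (Finset V)), K.card < n →
    (∀ σ ∈ K, σ.Nonempty) → (∀ σ ∈ K, ∀ τ, τ ⊆ σ → τ.Nonempty → τ ∈ K) →
    ∀ σ ∈ (algMatch f I K).A, σ.sup I = ((algMatch f I K).m σ).sup I := by
  intro n
  induction n with
  | zero => intro K h; omega
  | succ n ih =>
    intro K hK hne hdown σ hσA
    rw [algMatch] at hσA
    simp only [Finset.mem_union, Finset.mem_image, Finset.mem_biUnion, Finset.mem_filter,
      Finset.mem_univ, true_and] at hσA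
    rcases hσA with ⟨v, ⟨hvK, _⟩, rfl⟩ | ⟨v, ⟨hvK, hl⟩, σ', hσ', rfl⟩
    · rw [algMatch_m_singleton_sup f I K v hcomp, Finset.sup_singleton]
    · -- σ = insert v σ' with σ' ∈ A of the lower link
      rw [dif_pos hl] at hσ'
      set L := lowerLink K f v with hLdef
      have hLcard : L.card < n :=
        lt_of_lt_of_le (lowerLink_card_lt K f v hl) (Nat.lt_succ_iff.mp hK)
      have hσ'L : σ' ∈ lowerLink K f v := algMatch_A_subset f I n _ hLcard hσ'
      have hmem : σ' ∈ K ∧ v ∉ σ' ∧ insert v σ' ∈ K ∧ ∀ w ∈ σ', f w ≤ f v ∧ f w ≠ f v := by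
        simpa [lowerLink] using hσ'L
      obtain ⟨hσ'K, hvnot, hinsK, hf⟩ := hmem
      have hlt : ∀ w ∈ σ', I w < I v := fun w hw => hcomp w v (hf w hw).1 (hf w hw).2
      have hσ'ne : σ'.Nonempty := hne σ' hσ'K
      -- hypotheses for the lower link
      have hLsub : lowerLink K f v ⊆ K := by simp [lowerLink]
      have hneL : ∀ τ ∈ lowerLink K f v, τ.Nonempty :=
        fun τ hτ => hne τ (hLsub hτ)
      have hdownL : ∀ σ ∈ lowerLink K f v, ∀ τ, τ ⊆ σ → τ.Nonempty → τ ∈ lowerLink K f v := by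
        intro σ hσ τ hτσ hτne
        simp only [lowerLink, Finset.mem_filter] at hσ ⊢
        obtain ⟨hσK, hvσ, hivσ, hfσ⟩ := hσ
        refine ⟨hdown σ hσK τ hτσ hτne, fun hv => hvσ (hτσ hv), ?_, fun w hw => hfσ w (hτσ hw)⟩
        exact hdown _ hivσ _ (Finset.insert_subset_insert v hτσ) (Finset.insert_nonempty _ _)
      have hIH := ih (lowerLink K f v) hLcard hneL hdownL σ' hσ'
      -- evaluate m on insert v σ'
      rw [algMatch]
      simp only []
      have hτ : (insert v σ').Nonempty := Finset.insert_nonempty _ _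
      rw [dif_pos hτ]
      have hc : (Finset.exists_max_image (insert v σ') I hτ).choose = v := by
        have hspec := (Finset.exists_max_image (insert v σ') I hτ).choose_spec
        rcases Finset.mem_insert.mp hspec.1 with h | h
        · exact h
        · exfalso
          have h1 := hlt _ h
          have h2 := hspec.2 v (Finset.mem_insert_self _ _)
          omega
      rw [hc]
      have hne2 : insert v σ' ≠ {v} := by
        obtain ⟨w, hw⟩ := hσ'ne
        intro hcontra
        have hwv : w = v := Finset.mem_singleton.mp (hcontra ▸ Finset.mem_insert_of_mem hw)
        have := hlt w hw
        rw [hwv] at this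
        omega
      rw [if_neg hne2, Finset.erase_insert hvnot, dif_pos hl, Finset.sup_insert,
        Finset.sup_insert, hIH]

/-- for the matching m produced by Algorithm 2 with an indexing I
compatible with f, every σ ∈ A satisfies maxI σ = maxI (m σ), where maxI is the
maximum of I over the vertices of a simplex. -/
theorem stmt15 {V : Type*} [DecidableEq V] [Fintype V] {k : ℕ}
    (K : Finset (Finset V))
    (hne : ∀ σ ∈ K, σ.Nonempty)
    (hdown : ∀ σ ∈ K, ∀ τ, τ ⊆ σ → τ.Nonempty → τ ∈ K)
    (f : V → Fin k → ℝ) (I : V → ℕ) (hI : Function.Injective I)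
    (hcomp : ∀ v w : V, f v ≤ f w → f v ≠ f w → I v < I w) :
    ∀ σ ∈ (algMatch f I K).A, σ.sup I = ((algMatch f I K).m σ).sup I :=
  algMatch_main f I hcomp (K.card + 1) K (Nat.lt_succ_self _) hne hdown
end

section
/- The matching m produced by Algorithm 2 is compatible with the sublevel filtration: if σ ∈ A and σ ∈ S^α, then m(σ) ∈ S^α, for every α ∈ ℝ^k. -/
section Aux
variable {V : Type*} [DecidableEq V] [Fintype V] {k : ℕ} (f : V → Fin k → ℝ) (I : V → ℕ)

open Classical in
lemma algMatch_A_cases {K : Finset (Finset V)} {σ : Finset V}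
    (h : σ ∈ (algMatch f I K).A) :
    (∃ v, ({v} : Finset V) ∈ K ∧ (lowerLink K f v).Nonempty ∧ σ = {v}) ∨
    (∃ v, ({v} : Finset V) ∈ K ∧ (lowerLink K f v).Nonempty ∧
      ∃ τ ∈ (algMatch f I (lowerLink K f v)).A, σ = insert v τ) := by
  rw [algMatch] at h
  simp only [Finset.mem_union, Finset.mem_image, Finset.mem_biUnion, Finset.mem_filter,
    Finset.mem_univ, true_and] at h
  rcases h with ⟨v, ⟨h1, h2⟩, h3⟩ | ⟨v, ⟨h1, h2⟩, τ, hτ, h3⟩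
  · exact Or.inl ⟨v, h1, h2, h3.symm⟩
  · rw [dif_pos h2] at hτ
    exact Or.inr ⟨v, h1, h2, τ, hτ, h3.symm⟩

lemma algMatch_A_subset_s17 (K : Finset (Finset V)) :
    ∀ σ ∈ (algMatch f I K).A, σ ∈ K := by
  intro σ hσ
  rcases algMatch_A_cases f I hσ with ⟨v, h1, _, rfl⟩ | ⟨v, _, h2, τ, hτ, rfl⟩
  · exact h1
  · have hmem := algMatch_A_subset_s17 (lowerLink K f v) τ hτ
    simp only [lowerLink, Finset.mem_filter] at hmem
    exact hmem.2.2.1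
termination_by K.card
decreasing_by exact lowerLink_card_lt K f v h2

lemma algMatch_A_nonempty {K : Finset (Finset V)} {σ : Finset V}
    (h : σ ∈ (algMatch f I K).A) : σ.Nonempty := by
  rcases algMatch_A_cases f I h with ⟨v, _, _, rfl⟩ | ⟨v, _, _, τ, _, rfl⟩
  · exact Finset.singleton_nonempty v
  · exact ⟨v, Finset.mem_insert_self v τ⟩

lemma mem_lowerLink_prop {K : Finset (Finset V)} {τ : Finset V} {v : V}
    (h : τ ∈ lowerLink K f v) : ∀ w ∈ τ, f w ≤ f v ∧ f w ≠ f v := by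
  simp only [lowerLink, Finset.mem_filter] at h
  exact h.2.2.2

open Classical in
lemma algMatch_m_singleton {K : Finset (Finset V)} {v : V} :
    ∀ u ∈ (algMatch f I K).m {v}, f u ≤ f v := by
  intro u hu
  rw [algMatch] at hu
  simp only at hu
  rw [dif_pos (Finset.singleton_nonempty v)] at hu
  have hspec := (Finset.exists_max_image {v} I (Finset.singleton_nonempty v)).choose_spec
  have hbv : (Finset.exists_max_image {v} I (Finset.singleton_nonempty v)).choose = v :=
    Finset.mem_singleton.1 hspec.1
  rw [hbv] at hu
  rw [if_pos rfl] at hu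
  rcases Finset.mem_insert.1 hu with rfl | hu2
  · exact le_refl _
  · rw [Finset.mem_singleton] at hu2
    rw [hu2]
    split <;> rename_i hD1 <;>
    · split <;> rename_i hD2
      · have hc := (Finset.exists_min_image _ I hD2).choose_spec.1
        have hc0 := (Finset.mem_filter.1 hc).1
        have hcC := (Finset.mem_filter.1 hc0).2
        have hll := (Finset.mem_sdiff.1 hcC).1
        exact (mem_lowerLink_prop f hll _ (Finset.mem_singleton_self _)).1
      · exact le_refl _


open Classical in
lemma algMatch_m_insert {K : Finset (Finset V)} {v : V} {τ : Finset V}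
    (hv : v ∉ τ) (hne : τ.Nonempty) (hll : (lowerLink K f v).Nonempty)
    (hlt : ∀ w ∈ τ, I w < I v) :
    (algMatch f I K).m (insert v τ) =
      insert v ((algMatch f I (lowerLink K f v)).m τ) := by
  rw [algMatch]
  simp only
  have hne' : (insert v τ).Nonempty := ⟨v, Finset.mem_insert_self v τ⟩
  rw [dif_pos hne']
  have hspec := (Finset.exists_max_image (insert v τ) I hne').choose_spec
  have hbv : (Finset.exists_max_image (insert v τ) I hne').choose = v := by
    rcases Finset.mem_insert.1 hspec.1 with h | h
    · exact h
    · exact absurd (hspec.2 v (Finset.mem_insert_self v τ)) (Nat.not_le.2 (hlt _ h))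
  rw [hbv]
  have hneq : insert v τ ≠ {v} := by
    obtain ⟨w, hw⟩ := hne
    intro h
    have hw' : w ∈ ({v} : Finset V) := h ▸ Finset.mem_insert_of_mem hw
    exact hv (Finset.mem_singleton.1 hw' ▸ hw)
  rw [if_neg hneq, Finset.erase_insert hv, dif_pos hll]

lemma algMatch_key (hcomp : ∀ v w : V, f v ≤ f w → f v ≠ f w → I v < I w)
    (K : Finset (Finset V)) :
    ∀ (α : Fin k → ℝ) (σ : Finset V), σ ∈ (algMatch f I K).A → (∀ v ∈ σ, f v ≤ α) →
      ∀ u ∈ (algMatch f I K).m σ, f u ≤ α := by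
  intro α σ hσ hα u hu
  rcases algMatch_A_cases f I hσ with ⟨v, _, hll, rfl⟩ | ⟨v, _, hll, τ, hτ, rfl⟩
  · exact le_trans (algMatch_m_singleton f I u hu) (hα v (Finset.mem_singleton_self v))
  · have hτK := algMatch_A_subset_s17 f I _ τ hτ
    have hprop := mem_lowerLink_prop f hτK
    have hv : v ∉ τ := by
      simp only [lowerLink, Finset.mem_filter] at hτK
      exact hτK.2.1
    have hτne := algMatch_A_nonempty f I hτ
    have hlt : ∀ w ∈ τ, I w < I v := fun w hw => hcomp w v (hprop w hw).1 (hprop w hw).2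
    rw [algMatch_m_insert f I hv hτne hll hlt] at hu
    rcases Finset.mem_insert.1 hu with rfl | hu2
    · exact hα u (Finset.mem_insert_self u τ)
    · exact algMatch_key hcomp (lowerLink K f v) α τ hτ
        (fun w hw => hα w (Finset.mem_insert_of_mem hw)) u hu2
termination_by K.card
decreasing_by exact lowerLink_card_lt K f v hll

end Aux

/-- the matching produced by Algorithm 2 is compatible with the sublevel
set filtration: if σ ∈ A lies in S^α (all its vertices have f-value ⪯ α), then so
does m σ. -/
theorem stmt17 {V : Type*} [DecidableEq V] [Fintype V] {k : ℕ}
    (K : Finset (Finset V))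
    (hne : ∀ σ ∈ K, σ.Nonempty)
    (hdown : ∀ σ ∈ K, ∀ τ, τ ⊆ σ → τ.Nonempty → τ ∈ K)
    (f : V → Fin k → ℝ) (I : V → ℕ) (hI : Function.Injective I)
    (hcomp : ∀ v w : V, f v ≤ f w → f v ≠ f w → I v < I w) :
    ∀ (α : Fin k → ℝ), ∀ σ ∈ (algMatch f I K).A, (∀ v ∈ σ, f v ≤ α) →
      ∀ v ∈ (algMatch f I K).m σ, f v ≤ α :=
  fun α σ h1 h2 => algMatch_key f I hcomp K α σ h1 h2
end
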